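/- Let q be a conjunctive query over a schema R, D a database for R, and Σ a set of TGDs over R in normal form for which XRewrite terminates on every component of the optimal existential-join decomposition of q w.r.t. Σ (in particular, Σ linear or sticky). Then q_Σ^∥(D) = ans(q,D,Σ), where q_Σ^∥ is the UCQ produced by XRewriteParallel(q,Σ). -/

import Mathlib

/-!
Soundness. A rewriting step is sound in every model of Σ: the terms at the existential
position of an applicable TGD are unshared variables, so they can be sent to the witness of the
existential variable. A match of a member of the union pulls back block by block, and the
matches of the blocks agree on the exported variables, since the reconciliation unifier
identifies the heads; so they glue.

Completeness. Match `q` in the chase. A labeled null invented by `σ` occurs only at positions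
affected w.r.t. `σ`, so every exported variable is sent to a constant and the blocks can be
rewritten separately. For a block, take the image atom of highest chase level and the firing
that created it: if an atom sent onto it has a shared variable at the existential position,
factorize, otherwise rewrite the atoms sent onto it with the fired TGD. The triple (top level,
number of atoms at the top level, number of atoms) decreases lexicographically until the block
is sent into `D`. Renamed apart, the database matches of the rewritings solve the
reconciliation equations, and their most general unifier gives a member of the union.

The unifiers of XRewrite may send variables to labeled nulls, which would break soundness;
finiteness of the rewritings up to renaming rules this out.
-/

namespace OntDB

/-- Terms: constants, labeled nulls, and variables (each indexed by naturals). -/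
inductive Term : Type
  | const : ℕ → Term
  | null  : ℕ → Term
  | var   : ℕ → Term
deriving DecidableEq

/-- a term is not a labeled null -/
def Term.noNull : Term → Prop
  | .null _ => False
  | _ => True

/-- Atoms: a predicate symbol applied to a list of argument terms. -/
structure Atom : Type where
  pred : ℕ
  args : List Term
deriving DecidableEq

/-- A relational schema: a finite set of predicate symbols, each with an arity. -/
structure Schema : Type where
  preds : Finset ℕ
  ar : ℕ → ℕ

/-- arity(R) : the maximum arity over the predicates of R -/
def Schema.maxArity (R : Schema) : ℕ := R.preds.sup R.ar

def Atom.overSchema (R : Schema) (a : Atom) : Prop :=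
  a.pred ∈ R.preds ∧ a.args.length = R.ar a.pred

/-- applying a substitution to an atom -/
def Atom.subst (h : Term → Term) (a : Atom) : Atom := ⟨a.pred, a.args.map h⟩

/-- a substitution fixes every constant -/
def constFix (h : Term → Term) : Prop := ∀ c, h (Term.const c) = Term.const c

/-- A homomorphism from the set of atoms `A` to the set of atoms `A'`. -/
def IsHom (h : Term → Term) (A A' : Set Atom) : Prop :=
  constFix h ∧ ∀ a ∈ A, a.subst h ∈ A'

/-- the variables occurring in an atom -/
def Atom.vars (a : Atom) : Finset ℕ :=
  (a.args.filterMap (fun t => match t with | .var v => some v | _ => none)).toFinset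

/-- the number of occurrences of the variable `v` in the atom `a` -/
def Atom.countVar (a : Atom) (v : ℕ) : ℕ := a.args.count (Term.var v)

/-- the variables occurring in a finite set of atoms -/
def varsOfSet (S : Finset Atom) : Finset ℕ := S.sup Atom.vars

/-- A conjunctive query: a head atom together with a finite set of body atoms. -/
structure CQ : Type where
  head : Atom
  body : Finset Atom
deriving DecidableEq

/-- the variables occurring in a CQ (head and body) -/
def CQ.vars (q : CQ) : Finset ℕ := q.head.vars ∪ varsOfSet q.body

/-- the number of occurrences of the variable `v` in the CQ `q` (head and body) -/
def CQ.countVar (q : CQ) (v : ℕ) : ℕ := q.head.countVar v + ∑ a ∈ q.body, a.countVar v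

/-- a variable is shared in `q` if it occurs more than once in `q` -/
def CQ.shared (q : CQ) (v : ℕ) : Prop := 2 ≤ q.countVar v

/-- a CQ over a schema: body atoms over the schema, and no labeled nulls occur -/
def CQ.overSchema (R : Schema) (q : CQ) : Prop :=
  (∀ a ∈ q.body, a.overSchema R ∧ ∀ t ∈ a.args, t.noNull) ∧ ∀ t ∈ q.head.args, t.noNull

/-- a tuple of constants -/
def isConstTuple (t : List Term) : Prop := ∀ s ∈ t, ∃ c, s = Term.const c

/-- Evaluation of a CQ over an instance: the tuples of constants obtained as images
of the distinguished terms under homomorphisms of the body into the instance. -/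
def CQ.eval (q : CQ) (I : Set Atom) : Set (List Term) :=
  { t | isConstTuple t ∧ ∃ h : Term → Term, IsHom h ↑q.body I ∧ q.head.args.map h = t }

/-- evaluation of a (possibly infinite) union of CQs -/
def ucqEval (Q : Set CQ) (I : Set Atom) : Set (List Term) := ⋃ q ∈ Q, q.eval I

/-- A TGD (in normal form representation): a finite set of body atoms plus a single
head atom; the existentially quantified variables are exactly the head variables
that do not occur in the body. -/
structure TGD : Type where
  body : Finset Atom
  head : Atom
deriving DecidableEq

/-- the universally quantified variables occurring in the head -/
def TGD.frontier (σ : TGD) : Finset ℕ := varsOfSet σ.body ∩ σ.head.vars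

/-- the existentially quantified variables -/
def TGD.exVars (σ : TGD) : Finset ℕ := σ.head.vars \ varsOfSet σ.body

def TGD.vars (σ : TGD) : Finset ℕ := varsOfSet σ.body ∪ σ.head.vars

/-- normal form: at most one existentially quantified variable, occurring once -/
def TGD.NormalForm (σ : TGD) : Prop :=
  σ.exVars.card ≤ 1 ∧ ∀ v ∈ σ.exVars, σ.head.countVar v = 1

/-- a TGD is linear if its body consists of a single atom -/
def TGD.Linear (σ : TGD) : Prop := σ.body.card = 1

/-- a set of TGDs is linear if all its members are -/
def LinearSet (Sig : Finset TGD) : Prop := ∀ σ ∈ Sig, σ.Linear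

def TGD.overSchema (R : Schema) (σ : TGD) : Prop :=
  σ.body.Nonempty ∧ (∀ a ∈ σ.body, a.overSchema R ∧ ∀ t ∈ a.args, t.noNull) ∧
  σ.head.overSchema R ∧ ∀ t ∈ σ.head.args, t.noNull

/-- satisfaction of a TGD by an instance -/
def TGD.sat (σ : TGD) (I : Set Atom) : Prop :=
  ∀ h : Term → Term, IsHom h ↑σ.body I →
    ∃ h' : Term → Term, constFix h' ∧
      (∀ v ∈ σ.frontier, h' (Term.var v) = h (Term.var v)) ∧ σ.head.subst h' ∈ I

/-- satisfaction of a set of TGDs -/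
def satSet (Sig : Finset TGD) (I : Set Atom) : Prop := ∀ σ ∈ Sig, σ.sat I

/-- a database for a schema: a finite set of atoms over the schema whose
arguments are constants -/
def IsDatabase (R : Schema) (D : Finset Atom) : Prop :=
  ∀ a ∈ D, a.overSchema R ∧ ∀ t ∈ a.args, ∃ c, t = Term.const c

/-- the certain answers of a CQ w.r.t. a database and a set of TGDs -/
def certAns (q : CQ) (D : Finset Atom) (Sig : Finset TGD) : Set (List Term) :=
  { t | ∀ I : Set Atom, ↑D ⊆ I → satSet Sig I → t ∈ q.eval I }

/-- the certain answers of a (possibly infinite) union of CQs -/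
def certAnsUCQ (Q : Set CQ) (D : Finset Atom) (Sig : Finset TGD) : Set (List Term) :=
  { t | ∀ I : Set Atom, ↑D ⊆ I → satSet Sig I → t ∈ ucqEval Q I }

/-- a unifier for a finite set of atoms -/
def IsUnifier (γ : Term → Term) (S : Finset Atom) : Prop :=
  constFix γ ∧ ∀ a ∈ S, ∀ b ∈ S, a.subst γ = b.subst γ

def Unifies (S : Finset Atom) : Prop := ∃ γ, IsUnifier γ S

/-- most general unifier -/
def IsMGU (γ : Term → Term) (S : Finset Atom) : Prop :=
  IsUnifier γ S ∧ ∀ γ', IsUnifier γ' S → ∃ δ : Term → Term, ∀ t, γ' t = δ (γ t)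

/-- `i` is the position of the existentially quantified variable in head(σ) -/
def TGD.exPos (σ : TGD) (i : ℕ) : Prop :=
  ∃ z ∈ σ.exVars, σ.head.args[i]? = some (Term.var z)

/-- applicability of the TGD σ to the set S ⊆ body(q) -/
def Applicable (q : CQ) (σ : TGD) (S : Finset Atom) : Prop :=
  S.Nonempty ∧ S ⊆ q.body ∧ Unifies (S ∪ {σ.head}) ∧
  ∀ a ∈ S, ∀ i, σ.exPos i →
    (∀ c, a.args[i]? ≠ some (Term.const c)) ∧
    ∀ v, a.args[i]? = some (Term.var v) → ¬ q.shared v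

/-- factorizability of the set S ⊆ body(q) w.r.t. the TGD σ -/
def Factorizable (q : CQ) (σ : TGD) (S : Finset Atom) : Prop :=
  S ⊆ q.body ∧ 2 ≤ S.card ∧ Unifies S ∧ (∃ i, σ.exPos i) ∧
  ∃ V : ℕ, V ∉ varsOfSet (q.body \ S) ∧
    ∀ a ∈ S, (∃ i, σ.exPos i ∧ a.args[i]? = some (Term.var V)) ∧
      ∀ j, a.args[j]? = some (Term.var V) → σ.exPos j

/-- renaming of variables -/
def renT (ρ : ℕ → ℕ) : Term → Term
  | .var v => .var (ρ v)
  | t => t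

/-- renaming the variables of a TGD -/
def TGD.rename (σ : TGD) (ρ : ℕ → ℕ) : TGD :=
  ⟨σ.body.image (Atom.subst (renT ρ)), σ.head.subst (renT ρ)⟩

/-- applying a substitution to a CQ -/
def CQ.subst (q : CQ) (γ : Term → Term) : CQ :=
  ⟨q.head.subst γ, q.body.image (Atom.subst γ)⟩

/-- the restriction on MGUs used by XRewrite under sticky sets of TGDs:
every variable of the protected set `W` (the variables of the input query) is
mapped to a variable of `W` (or to a constant).  For `W = ∅` no restriction. -/
def ProtectsVars (W : Finset ℕ) (γ : Term → Term) : Prop :=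
  ∀ v ∈ W, (∃ u ∈ W, γ (Term.var v) = Term.var u) ∨ ∃ c, γ (Term.var v) = Term.const c

/-- the substitution is the identity on all variables outside `V` -/
def IdOutside (V : Finset ℕ) (γ : Term → Term) : Prop :=
  ∀ v, v ∉ V → γ (Term.var v) = Term.var v

/-- one rewriting step of XRewrite (applied to `q`, producing `q'`) -/
def IsRewriteStep (Sig : Finset TGD) (W : Finset ℕ) (q q' : CQ) : Prop :=
  ∃ σ ∈ Sig, ∃ ρ : ℕ → ℕ, Function.Injective ρ ∧ (∀ v, ρ v ∉ q.vars) ∧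
    ∃ S : Finset Atom, Applicable q (σ.rename ρ) S ∧
      ∃ γ : Term → Term, IsMGU γ (S ∪ {(σ.rename ρ).head}) ∧
        IdOutside (varsOfSet (S ∪ {(σ.rename ρ).head})) γ ∧ ProtectsVars W γ ∧
        q' = (CQ.mk q.head ((q.body \ S) ∪ (σ.rename ρ).body)).subst γ

/-- one factorization step of XRewrite -/
def IsFactStep (Sig : Finset TGD) (W : Finset ℕ) (q q' : CQ) : Prop :=
  ∃ σ ∈ Sig, ∃ S : Finset Atom, Factorizable q σ S ∧
    ∃ γ : Term → Term, IsMGU γ S ∧ IdOutside (varsOfSet S) γ ∧ ProtectsVars W γ ∧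
      q' = q.subst γ

/-- the CQs obtainable from q by a finite sequence of rewriting and
factorization steps -/
inductive Reach (Sig : Finset TGD) (W : Finset ℕ) (q : CQ) : CQ → Prop
  | refl : Reach Sig W q q
  | rw {p p' : CQ} : Reach Sig W q p → IsRewriteStep Sig W p p' → Reach Sig W q p'
  | fact {p p' : CQ} : Reach Sig W q p → IsFactStep Sig W p p' → Reach Sig W q p'

/-- the output of XRewrite(q,Σ): q together with all CQs obtainable from q by a
finite sequence of rewriting and factorization steps whose last step is a
rewriting step -/
def XRewriteOut (Sig : Finset TGD) (W : Finset ℕ) (q : CQ) : Set CQ :=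
  {q} ∪ { p' | ∃ p : CQ, Reach Sig W q p ∧ IsRewriteStep Sig W p p' }

/-- two CQs are the same up to bijective variable renaming -/
def CQEquiv (p p' : CQ) : Prop :=
  ∃ ρ : ℕ → ℕ, Function.Bijective ρ ∧ p.subst (renT ρ) = p'

/-- the SMarking procedure: `Marked Sig σ v` says that the body variable `v` of
σ gets marked -/
inductive Marked (Sig : Finset TGD) : TGD → ℕ → Prop
  | init {σ : TGD} {v : ℕ} : σ ∈ Sig → v ∈ varsOfSet σ.body → v ∉ σ.head.vars →
      Marked Sig σ v
  | prop {σ σ' : TGD} {v : ℕ} (b : Atom) (u : ℕ → ℕ) : σ ∈ Sig → σ' ∈ Sig →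
      v ∈ varsOfSet σ.body → v ∈ σ.head.vars → b ∈ σ'.body →
      (∀ i : ℕ, σ.head.args[i]? = some (Term.var v) →
        b.args[i]? = some (Term.var (u i))) →
      (∀ i : ℕ, σ.head.args[i]? = some (Term.var v) → Marked Sig σ' (u i)) →
      Marked Sig σ v

/-- a set of TGDs is sticky if every marked variable occurs only once in the
body of its TGD -/
def Sticky (Sig : Finset TGD) : Prop :=
  ∀ σ ∈ Sig, ∀ v : ℕ, Marked Sig σ v → (∑ a ∈ σ.body, a.countVar v) = 1

/- ## Propagation graph and atom coverage -/

/-- a position of a schema: a predicate together with an argument index -/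
abbrev Pos := ℕ × ℕ

/-- the edges of the propagation graph -/
def PGEdge (σ : TGD) (pb ph : Pos) : Prop :=
  ∃ b ∈ σ.body, ∃ v : ℕ,
    b.pred = pb.1 ∧ b.args[pb.2]? = some (Term.var v) ∧
    σ.head.pred = ph.1 ∧ σ.head.args[ph.2]? = some (Term.var v)

/-- `vs` is a path in the propagation graph of Σ with edge labels `ls` -/
def IsPath (Sig : Finset TGD) (vs : List Pos) (ls : List TGD) : Prop :=
  vs.length = ls.length + 1 ∧
  ∀ j < ls.length, ∃ σ pb ph,
    ls[j]? = some σ ∧ vs[j]? = some pb ∧ vs[j + 1]? = some ph ∧ σ ∈ Sig ∧ PGEdge σ pb ph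

/-- a minimal path: no cycle is traversed twice consecutively -/
def MinimalPath (Sig : Finset TGD) (vs : List Pos) (ls : List TGD) : Prop :=
  IsPath Sig vs ls ∧
  ¬ ∃ i j : ℕ, 0 < i ∧ i + 1 < vs.length ∧ 0 < j ∧ j ≤ i ∧ i + j < vs.length ∧
      (∀ k ≤ j, vs[i - j + k]? = vs[i + k]?) ∧ ∀ k < j, ls[i - j + k]? = ls[i + k]?

/-- a tight sequence of (linear) TGDs -/
def TightSeq (σs : List TGD) : Prop :=
  ∀ j, j + 1 < σs.length →
    ∃ σ1 σ2, σs[j]? = some σ1 ∧ σs[j + 1]? = some σ2 ∧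
      ∃ h : Term → Term, constFix h ∧ σ2.body.image (Atom.subst h) = {σ1.head}

/-- a sequence of TGDs compatible to an atom -/
def CompatibleTo (σs : List TGD) (a : Atom) : Prop :=
  ∃ σ1, σs[0]? = some σ1 ∧ ∃ h : Term → Term, constFix h ∧
    σ1.body.image (Atom.subst h) = {a}

/-- pos(a,t): the positions (indices) at which the term t occurs in the atom a -/
def atomPos (a : Atom) (t : Term) : Set ℕ := { i | a.args[i]? = some t }

/-- T(q,a): the constants of a together with the variables of a shared in q -/
def Tq (q : CQ) (a : Atom) : Set Term :=
  { t | t ∈ a.args ∧ ((∃ c, t = Term.const c) ∨ ∃ v, t = Term.var v ∧ q.shared v) }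

/-- atom coverage: a covers b w.r.t. q and Σ -/
def Covers (Sig : Finset TGD) (q : CQ) (a b : Atom) : Prop :=
  (∀ t ∈ Tq q b, t ∈ a.args) ∧
  ∃ σs : List TGD, σs ≠ [] ∧ (∀ σ ∈ σs, σ ∈ Sig) ∧ TightSeq σs ∧ CompatibleTo σs a ∧
    ∀ t ∈ Tq q b, ∀ i ∈ atomPos b t,
      ∃ vs : List Pos, MinimalPath Sig vs σs ∧
        (∃ p0 : Pos, vs[0]? = some p0 ∧ p0.1 = a.pred ∧ p0.2 ∈ atomPos a t) ∧
        vs[vs.length - 1]? = some (b.pred, i)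


/-- the affected positions of the schema w.r.t. the pair ⟨σ,Σ⟩ -/
inductive AffectedPos (Sig : Finset TGD) (σ : TGD) : Pos → Prop
  | base {i : ℕ} : σ.exPos i → AffectedPos Sig σ (σ.head.pred, i)
  | step {σ' : TGD} {i v : ℕ} : σ' ∈ Sig →
      σ'.head.args[i]? = some (Term.var v) → v ∈ varsOfSet σ'.body →
      (∀ b ∈ σ'.body, ∀ j : ℕ, b.args[j]? = some (Term.var v) →
        AffectedPos Sig σ (b.pred, j)) →
      AffectedPos Sig σ (σ'.head.pred, i)

/-- the variable v occurs in body(q) only at positions affected w.r.t. ⟨σ,Σ⟩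
for some σ ∈ Σ -/
def OnlyAffectedVar (Sig : Finset TGD) (q : CQ) (v : ℕ) : Prop :=
  ∃ σ ∈ Sig, ∀ a ∈ q.body, ∀ j : ℕ, a.args[j]? = some (Term.var v) →
    AffectedPos Sig σ (a.pred, j)

/-- an existential-join decomposition of q w.r.t. Σ: a partition of body(q) such
that every variable occurring only at affected positions lies in a single block -/
def ExJoinDecomp (Sig : Finset TGD) (q : CQ) (P : Finset (Finset Atom)) : Prop :=
  (∀ S ∈ P, S.Nonempty) ∧ (∀ S ∈ P, S ⊆ q.body) ∧
  (∀ a ∈ q.body, ∃! S : Finset Atom, S ∈ P ∧ a ∈ S) ∧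
  ∀ v ∈ varsOfSet q.body, OnlyAffectedVar Sig q v →
    ∃ S ∈ P, v ∈ varsOfSet S ∧ ∀ S' ∈ P, S' ≠ S → v ∉ varsOfSet S'

/-- an optimal existential-join decomposition: no block can be split -/
def OptimalDecomp (Sig : Finset TGD) (q : CQ) (P : Finset (Finset Atom)) : Prop :=
  ExJoinDecomp Sig q P ∧
  ¬ ∃ S ∈ P, ∃ S₁ S₂ : Finset Atom, S₁.Nonempty ∧ S₂.Nonempty ∧
      Disjoint S₁ S₂ ∧ S₁ ∪ S₂ = S ∧
      ExJoinDecomp Sig q (P.erase S ∪ {S₁, S₂})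

/-- the head variables of the component S: the variables of S that are
distinguished in q or occur in body(q) outside S (in a fixed order) -/
def compHeadVars (q : CQ) (S : Finset Atom) : List ℕ :=
  (varsOfSet S ∩ (q.head.vars ∪ varsOfSet (q.body \ S))).sort (· ≤ ·)

/-- the component CQ q_i : p_i(f_i) ← C_i, where the fresh predicate p_i is
assigned by `pid` -/
def compCQ (q : CQ) (pid : Finset Atom → ℕ) (S : Finset Atom) : CQ :=
  ⟨⟨pid S, (compHeadVars q S).map Term.var⟩, S⟩

/-- a simultaneous unifier for a finite set of pairs of atoms -/
def IsUnifPairs (θ : Term → Term) (prs : Finset (Atom × Atom)) : Prop :=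
  constFix θ ∧ ∀ pr ∈ prs, Atom.subst θ pr.1 = Atom.subst θ pr.2

def IsMGUPairs (θ : Term → Term) (prs : Finset (Atom × Atom)) : Prop :=
  IsUnifPairs θ prs ∧ ∀ θ', IsUnifPairs θ' prs → ∃ δ : Term → Term, ∀ t, θ' t = δ (θ t)

/-- the output of XRewriteParallel: the UCQ obtained by unfolding the
non-recursive Datalog query consisting of the rewritings of the components
together with the reconciliation rule p(X) ← p_1(f_1),…,p_m(f_m) -/
def ParallelOut (Sig : Finset TGD) (q : CQ) (P : Finset (Finset Atom))
    (pid : Finset Atom → ℕ) : Set CQ :=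
  { q' | ∃ (c : Finset Atom → CQ) (ρ : Finset Atom → ℕ → ℕ) (θ : Term → Term),
      (∀ S ∈ P, c S ∈ XRewriteOut Sig ∅ (compCQ q pid S)) ∧
      (∀ S ∈ P, Function.Injective (ρ S)) ∧
      (∀ S ∈ P, ∀ v, ρ S v ∉ q.vars) ∧
      (∀ S ∈ P, ∀ S' ∈ P, S ≠ S' → ∀ v u, ρ S v ≠ ρ S' u) ∧
      IsMGUPairs θ (P.image fun S =>
        (Atom.subst (renT (ρ S)) (c S).head, (compCQ q pid S).head)) ∧
      q' = CQ.mk (q.head.subst θ)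
        (P.sup fun S => Finset.image (Atom.subst θ)
          ((c S).body.image (Atom.subst (renT (ρ S))))) }


open scoped Classical

theorem List.two_le_count_iff_exists_getElem? {α : Type*} [DecidableEq α] {l : List α} {x : α} :
    2 ≤ l.count x ↔ ∃ i j : ℕ, i ≠ j ∧ l[i]? = some x ∧ l[j]? = some x := by
  rw [← List.duplicate_iff_two_le_count, List.duplicate_iff_exists_distinct_get]
  constructor
  · rintro ⟨n, m, hnm, hn, hm⟩
    exact ⟨n, m, fun h => hnm.ne (Fin.ext h), by simp [hn], by simp [hm]⟩
  · rintro ⟨i, j, hij, hi, hj⟩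
    obtain ⟨hi', rfl⟩ := List.getElem?_eq_some_iff.mp hi
    obtain ⟨hj', hj⟩ := List.getElem?_eq_some_iff.mp hj
    rcases lt_or_gt_of_ne hij with h | h
    · exact ⟨⟨i, hi'⟩, ⟨j, hj'⟩, h, rfl, by simp [hj]⟩
    · exact ⟨⟨j, hj'⟩, ⟨i, hi'⟩, h, by simp [hj], rfl⟩

namespace Term

theorem noNull_iff {t : Term} : t.noNull ↔ (∃ c, t = const c) ∨ ∃ v, t = var v := by
  cases t <;> simp [noNull]

end Term

theorem constFix.comp {f g : Term → Term} (hf : constFix f) (hg : constFix g) :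
    constFix (f ∘ g) := fun c => by simp [hg c, hf c]

namespace Atom

theorem ext' {a b : Atom} (hp : a.pred = b.pred) (ha : a.args = b.args) : a = b := by
  cases a; cases b; simp_all

@[simp] theorem subst_pred (f : Term → Term) (a : Atom) : (a.subst f).pred = a.pred := rfl

@[simp] theorem subst_args (f : Term → Term) (a : Atom) : (a.subst f).args = a.args.map f :=
  rfl

theorem subst_subst (f g : Term → Term) (a : Atom) : (a.subst g).subst f = a.subst (f ∘ g) := by
  simp [Atom.subst]

theorem subst_congr {f g : Term → Term} {a : Atom} (h : ∀ t ∈ a.args, f t = g t) :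
    a.subst f = a.subst g :=
  ext' rfl (List.map_congr_left h)

theorem subst_eq_subst_iff {f g : Term → Term} {a b : Atom} :
    a.subst f = b.subst g ↔
      a.pred = b.pred ∧ ∀ i : ℕ, (a.args[i]?).map f = (b.args[i]?).map g := by
  simp [Atom.subst, List.ext_getElem?_iff]

theorem mem_vars {a : Atom} {v : ℕ} : v ∈ a.vars ↔ Term.var v ∈ a.args := by
  simp only [Atom.vars, List.mem_toFinset, List.mem_filterMap]
  constructor
  · rintro ⟨t, ht, he⟩
    cases t <;> simp_all
  · exact fun h => ⟨_, h, rfl⟩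

end Atom

theorem mem_varsOfSet {S : Finset Atom} {v : ℕ} :
    v ∈ varsOfSet S ↔ ∃ a ∈ S, Term.var v ∈ a.args := by
  simp [varsOfSet, Finset.mem_sup, Atom.mem_vars]

namespace CQ

@[simp] theorem subst_head (q : CQ) (f : Term → Term) : (q.subst f).head = q.head.subst f := rfl

@[simp] theorem subst_body (q : CQ) (f : Term → Term) :
    (q.subst f).body = q.body.image (Atom.subst f) := rfl

theorem subst_subst (q : CQ) (f g : Term → Term) : (q.subst g).subst f = q.subst (f ∘ g) := by
  simp [CQ.subst, Finset.image_image, Function.comp_def, Atom.subst_subst]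

theorem mem_vars_of_mem_body {q : CQ} {a : Atom} {v : ℕ} (ha : a ∈ q.body)
    (hv : Term.var v ∈ a.args) : v ∈ q.vars :=
  Finset.mem_union_right _ (mem_varsOfSet.mpr ⟨a, ha, hv⟩)

theorem mem_vars_of_mem_head {q : CQ} {v : ℕ} (hv : Term.var v ∈ q.head.args) : v ∈ q.vars :=
  Finset.mem_union_left _ (Atom.mem_vars.mpr hv)

theorem shared_of_mem_head {q : CQ} {a : Atom} {v : ℕ} (hh : Term.var v ∈ q.head.args)
    (ha : a ∈ q.body) (hv : Term.var v ∈ a.args) : q.shared v := by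
  have h₁ : 1 ≤ q.head.countVar v := List.one_le_count_iff.mpr hh
  have h₂ : 1 ≤ a.countVar v := List.one_le_count_iff.mpr hv
  have := Finset.single_le_sum (f := (Atom.countVar · v)) (fun _ _ => Nat.zero_le _) ha
  unfold shared countVar
  omega

theorem shared_of_mem_two {q : CQ} {a b : Atom} {v : ℕ} (ha : a ∈ q.body) (hb : b ∈ q.body)
    (hab : a ≠ b) (hva : Term.var v ∈ a.args) (hvb : Term.var v ∈ b.args) : q.shared v := by
  have h₁ : 1 ≤ a.countVar v := List.one_le_count_iff.mpr hva
  have h₂ : 1 ≤ b.countVar v := List.one_le_count_iff.mpr hvb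
  have := Finset.sum_le_sum_of_subset (f := (Atom.countVar · v))
    (Finset.insert_subset ha (Finset.singleton_subset_iff.mpr hb))
  rw [Finset.sum_pair hab] at this
  unfold shared countVar
  omega

theorem shared_of_getElem?_ne {q : CQ} {a : Atom} {v i j : ℕ} (ha : a ∈ q.body)
    (hi : a.args[i]? = some (Term.var v)) (hj : a.args[j]? = some (Term.var v)) (hij : i ≠ j) :
    q.shared v := by
  have h₂ : 2 ≤ a.countVar v :=
    List.two_le_count_iff_exists_getElem?.mpr ⟨i, j, hij, hi, hj⟩
  have := Finset.single_le_sum (f := (Atom.countVar · v)) (fun _ _ => Nat.zero_le _) ha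
  unfold shared countVar
  omega

theorem eq_of_not_shared {q : CQ} {a b : Atom} {v i j : ℕ} (hv : ¬ q.shared v)
    (ha : a ∈ q.body) (hi : a.args[i]? = some (Term.var v))
    (hb : b ∈ q.body) (hj : b.args[j]? = some (Term.var v)) : b = a ∧ j = i := by
  by_cases hba : b = a
  · subst hba
    by_contra hji
    exact hv (shared_of_getElem?_ne ha hi hj fun h => hji ⟨rfl, h.symm⟩)
  · exact absurd (shared_of_mem_two hb ha hba (List.mem_of_getElem? hj)
      (List.mem_of_getElem? hi)) hv

end CQ

theorem TGD.exPos_unique {σ : TGD} (hnf : σ.NormalForm) {i j : ℕ} (hi : σ.exPos i)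
    (hj : σ.exPos j) : i = j := by
  obtain ⟨z, hz, hzi⟩ := hi
  obtain ⟨z', hz', hzj⟩ := hj
  obtain rfl : z = z' := Finset.card_le_one.mp hnf.1 z hz z' hz'
  by_contra hij
  have := List.two_le_count_iff_exists_getElem?.mpr ⟨i, j, hij, hzi, hzj⟩
  have := hnf.2 z hz
  unfold Atom.countVar at this
  omega

instance : Inhabited Term := ⟨Term.const 0⟩

instance : Inhabited CQ := ⟨⟨⟨0, []⟩, ∅⟩⟩

/-! ## Most general unifiers -/

def SolvesEqns (E : Set (Term × Term)) (θ : Term → Term) : Prop :=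
  constFix θ ∧ ∀ e ∈ E, θ e.1 = θ e.2

def EqnsEquiv (E : Set (Term × Term)) (t s : Term) : Prop :=
  ∀ θ, SolvesEqns E θ → θ t = θ s

noncomputable def classRep (C : Term → Prop) : Term :=
  if h : ∃ c, C (Term.const c) then Term.const h.choose else Classical.epsilon C

/-- The most general solution of `E`. -/
noncomputable def eqnsRep (E : Set (Term × Term)) (t : Term) : Term := classRep (EqnsEquiv E t)

section eqnsRep

variable {E : Set (Term × Term)}

theorem eqnsEquiv_eqnsRep (t : Term) : EqnsEquiv E t (eqnsRep E t) := by
  unfold eqnsRep classRep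
  split_ifs with h
  · exact h.choose_spec
  · exact Classical.epsilon_spec (p := EqnsEquiv E t) ⟨t, fun _ _ => rfl⟩

theorem eqnsRep_eq_of_eqnsEquiv {t s : Term} (h : EqnsEquiv E t s) : eqnsRep E t = eqnsRep E s := by
  have : EqnsEquiv E t = EqnsEquiv E s := funext fun u => propext
    ⟨fun htu θ hθ => (h θ hθ).symm.trans (htu θ hθ),
      fun hsu θ hθ => (h θ hθ).trans (hsu θ hθ)⟩
  unfold eqnsRep
  rw [this]

theorem SolvesEqns.comp_eqnsRep {θ : Term → Term} (hθ : SolvesEqns E θ) (t : Term) :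
    θ (eqnsRep E t) = θ t :=
  (eqnsEquiv_eqnsRep t θ hθ).symm

theorem eqnsRep_const (hsol : ∃ θ, SolvesEqns E θ) (c : ℕ) :
    eqnsRep E (Term.const c) = Term.const c := by
  obtain ⟨θ, hθ⟩ := hsol
  have h : ∃ c', EqnsEquiv E (Term.const c) (Term.const c') := ⟨c, fun _ _ => rfl⟩
  have hc := h.choose_spec θ hθ
  rw [hθ.1, hθ.1, Term.const.injEq] at hc
  simp only [eqnsRep, classRep, dif_pos h, ← hc]

theorem solvesEqns_eqnsRep (hsol : ∃ θ, SolvesEqns E θ) : SolvesEqns E (eqnsRep E) :=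
  ⟨eqnsRep_const hsol, fun e he => eqnsRep_eq_of_eqnsEquiv fun _ hθ => hθ.2 e he⟩

/-- Changing a solution at such a variable to any constant gives another solution. -/
theorem eqnsRep_var (hsol : ∃ θ, SolvesEqns E θ) {v : ℕ}
    (hv : ∀ e ∈ E, e.1 ≠ Term.var v ∧ e.2 ≠ Term.var v) :
    eqnsRep E (Term.var v) = Term.var v := by
  obtain ⟨θ, hθ⟩ := hsol
  have hupd : ∀ c, SolvesEqns E (Function.update θ (Term.var v) (Term.const c)) := fun c =>
    ⟨fun c' => by simp [hθ.1 c'], fun e he => by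
      simp [Function.update_of_ne (hv e he).1, Function.update_of_ne (hv e he).2, hθ.2 e he]⟩
  have hclass : EqnsEquiv E (Term.var v) = (· = Term.var v) := by
    funext s
    refine propext ⟨fun hs => ?_, fun hs => hs ▸ fun _ _ => rfl⟩
    by_contra hne
    have h0 := hs _ (hupd 0)
    have h1 := hs _ (hupd 1)
    simp only [Function.update_self, Function.update_of_ne hne] at h0 h1
    exact absurd (h0.trans h1.symm) (by simp)
  have hnc : ¬ ∃ c, Term.const c = Term.var v := by simp
  simp only [eqnsRep, classRep, hclass, dif_neg hnc]
  exact Classical.epsilon_spec (p := (· = Term.var v)) ⟨_, rfl⟩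

end eqnsRep

def pairEqns (prs : Finset (Atom × Atom)) : Set (Term × Term) :=
  {e | ∃ pr ∈ prs, ∃ i : ℕ, pr.1.args[i]? = some e.1 ∧ pr.2.args[i]? = some e.2}

theorem IsUnifPairs.solvesEqns {θ : Term → Term} {prs : Finset (Atom × Atom)}
    (h : IsUnifPairs θ prs) : SolvesEqns (pairEqns prs) θ := by
  refine ⟨h.1, ?_⟩
  rintro ⟨t, s⟩ ⟨pr, hpr, i, h₁, h₂⟩
  simpa [h₁, h₂] using (Atom.subst_eq_subst_iff.mp (h.2 pr hpr)).2 i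

/-- Unifiability fixes the predicates and arities, so solving the argumentwise equations is
enough. -/
theorem IsUnifPairs.of_solvesEqns {θ₀ θ : Term → Term} {prs : Finset (Atom × Atom)}
    (h₀ : IsUnifPairs θ₀ prs) (h : SolvesEqns (pairEqns prs) θ) : IsUnifPairs θ prs := by
  refine ⟨h.1, fun pr hpr => Atom.subst_eq_subst_iff.mpr ⟨?_, fun i => ?_⟩⟩
  · exact (Atom.subst_eq_subst_iff.mp (h₀.2 pr hpr)).1
  have h₀i := (Atom.subst_eq_subst_iff.mp (h₀.2 pr hpr)).2 i
  cases h₁ : pr.1.args[i]? <;> cases h₂ : pr.2.args[i]? <;> simp only [h₁, h₂] at h₀i ⊢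
  · exact absurd h₀i (by simp)
  · exact absurd h₀i (by simp)
  · exact congrArg some (h.2 (_, _) ⟨pr, hpr, i, h₁, h₂⟩)

theorem IsMGUPairs.of_comp_eq {γ : Term → Term} {prs : Finset (Atom × Atom)}
    (hγ : IsUnifPairs γ prs) (habs : ∀ θ, IsUnifPairs θ prs → θ ∘ γ = θ) :
    IsMGUPairs γ prs :=
  ⟨hγ, fun θ hθ => ⟨θ, fun t => (congrFun (habs θ hθ) t).symm⟩⟩

theorem exists_unifPairs_comp_eq {prs : Finset (Atom × Atom)} (h : ∃ θ, IsUnifPairs θ prs) :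
    ∃ γ, IsUnifPairs γ prs ∧ (∀ θ, IsUnifPairs θ prs → θ ∘ γ = θ) ∧
      ∀ v, (∀ pr ∈ prs, Term.var v ∉ pr.1.args ∧ Term.var v ∉ pr.2.args) →
        γ (Term.var v) = Term.var v := by
  obtain ⟨θ₀, hθ₀⟩ := h
  have hsol : ∃ θ, SolvesEqns (pairEqns prs) θ := ⟨θ₀, hθ₀.solvesEqns⟩
  refine ⟨eqnsRep (pairEqns prs), hθ₀.of_solvesEqns (solvesEqns_eqnsRep hsol),
    fun θ hθ => funext hθ.solvesEqns.comp_eqnsRep, fun v hv => eqnsRep_var hsol ?_⟩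
  rintro e ⟨pr, hpr, i, h₁, h₂⟩
  exact ⟨fun he => (hv pr hpr).1 (he ▸ List.mem_of_getElem? h₁),
    fun he => (hv pr hpr).2 (he ▸ List.mem_of_getElem? h₂)⟩

theorem isUnifier_iff_isUnifPairs {θ : Term → Term} {S : Finset Atom} :
    IsUnifier θ S ↔ IsUnifPairs θ (S ×ˢ S) := by
  simp only [IsUnifier, IsUnifPairs, Finset.mem_product, Prod.forall, and_imp]
  exact and_congr_right fun _ =>
    ⟨fun h a b ha hb => h a ha b hb, fun h a ha b hb => h a b ha hb⟩

theorem exists_mgu_comp_eq {S : Finset Atom} (h : Unifies S) :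
    ∃ γ, IsMGU γ S ∧ IdOutside (varsOfSet S) γ ∧
      ∀ θ, IsUnifier θ S → θ ∘ γ = θ := by
  simp only [Unifies, isUnifier_iff_isUnifPairs] at h
  obtain ⟨γ, hγ, habs, hid⟩ := exists_unifPairs_comp_eq h
  simp only [← isUnifier_iff_isUnifPairs] at hγ habs
  refine ⟨γ, ⟨hγ, fun θ hθ => ⟨θ, fun t => (congrFun (habs θ hθ) t).symm⟩⟩,
    fun v hv => hid v ?_, habs⟩
  intro pr hpr
  rw [Finset.mem_product] at hpr
  exact ⟨fun h => hv (mem_varsOfSet.mpr ⟨_, hpr.1, h⟩),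
    fun h => hv (mem_varsOfSet.mpr ⟨_, hpr.2, h⟩)⟩

theorem isUnifier_of_forall_subst_eq {θ : Term → Term} {S : Finset Atom} {A : Atom}
    (hθ : constFix θ) (h : ∀ a ∈ S, a.subst θ = A) : IsUnifier θ S :=
  ⟨hθ, fun a ha b hb => (h a ha).trans (h b hb).symm⟩

/-! ## Labeled nulls in rewritings -/

def CQ.NullFree (q : CQ) : Prop :=
  (∀ t ∈ q.head.args, t.noNull) ∧ ∀ a ∈ q.body, ∀ t ∈ a.args, t.noNull

def Atom.nulls (a : Atom) : Finset ℕ :=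
  (a.args.filterMap fun t => match t with | .null n => some n | _ => none).toFinset

theorem Atom.mem_nulls {a : Atom} {n : ℕ} : n ∈ a.nulls ↔ Term.null n ∈ a.args := by
  simp only [Atom.nulls, List.mem_toFinset, List.mem_filterMap]
  constructor
  · rintro ⟨t, ht, he⟩
    cases t <;> simp_all
  · exact fun h => ⟨_, h, rfl⟩

def CQ.nulls (q : CQ) : Finset ℕ := q.head.nulls ∪ q.body.sup Atom.nulls

theorem CQ.mem_nulls {q : CQ} {n : ℕ} :
    n ∈ q.nulls ↔ Term.null n ∈ q.head.args ∨ ∃ a ∈ q.body, Term.null n ∈ a.args := by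
  simp [CQ.nulls, Finset.mem_sup, Atom.mem_nulls]

theorem CQ.NullFree.of_nulls_eq_empty {q : CQ} (h : q.nulls = ∅) : q.NullFree := by
  refine ⟨fun t ht => ?_, fun a ha t ht => ?_⟩ <;> cases t <;> try trivial
  all_goals exact absurd (h ▸ CQ.mem_nulls.mpr (by tauto)) (Finset.notMem_empty _)

theorem CQ.mem_nulls_subst {q : CQ} {f : Term → Term} {n k : ℕ}
    (hf : f (Term.null n) = Term.null k) (hn : n ∈ q.nulls) : k ∈ (q.subst f).nulls := by
  rw [CQ.mem_nulls] at hn ⊢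
  rcases hn with h | ⟨a, ha, h⟩
  · exact Or.inl (hf ▸ List.mem_map_of_mem h)
  · exact Or.inr ⟨a.subst f, Finset.mem_image_of_mem _ ha, hf ▸ List.mem_map_of_mem h⟩

theorem renT_eq_null_iff {ρ : ℕ → ℕ} {t : Term} {n : ℕ} :
    renT ρ t = Term.null n ↔ t = Term.null n := by
  cases t <;> simp [renT]

theorem CQ.nulls_subst_renT (ρ : ℕ → ℕ) (q : CQ) : (q.subst (renT ρ)).nulls = q.nulls := by
  have hatom (a : Atom) : (a.subst (renT ρ)).nulls = a.nulls := by
    ext n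
    simp [Atom.mem_nulls, renT_eq_null_iff]
  simp only [CQ.nulls, subst_head, subst_body, hatom, Finset.sup_image, Function.comp_def]

theorem CQEquiv.nulls_eq {p p' : CQ} (h : CQEquiv p p') : p.nulls = p'.nulls := by
  obtain ⟨ρ, -, rfl⟩ := h
  exact (CQ.nulls_subst_renT ρ p).symm

section Perm

variable {Sig : Finset TGD} {W : Finset ℕ} (e : Equiv.Perm Term) (he : constFix e)
  (hev : ∀ v, e (Term.var v) = Term.var v)

include he in
theorem IsMGU.perm_comp {γ : Term → Term} {S : Finset Atom} (h : IsMGU γ S) :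
    IsMGU (e ∘ γ) S := by
  refine ⟨⟨he.comp h.1.1, fun a ha b hb => ?_⟩, fun θ hθ => ?_⟩
  · rw [← Atom.subst_subst, ← Atom.subst_subst, h.1.2 a ha b hb]
  · obtain ⟨δ, hδ⟩ := h.2 θ hθ
    exact ⟨δ ∘ e.symm, fun t => by simp [hδ t]⟩

include hev in
theorem IdOutside.perm_comp {V : Finset ℕ} {γ : Term → Term} (h : IdOutside V γ) :
    IdOutside V (e ∘ γ) := fun v hv => by simp [h v hv, hev]

include he hev in
theorem ProtectsVars.perm_comp {γ : Term → Term} (h : ProtectsVars W γ) :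
    ProtectsVars W (e ∘ γ) := by
  intro v hv
  rcases h v hv with ⟨u, hu, hγ⟩ | ⟨c, hγ⟩
  · exact Or.inl ⟨u, hu, by simp [hγ, hev]⟩
  · exact Or.inr ⟨c, by simp [hγ, he c]⟩

include he hev in
theorem IsRewriteStep.subst_perm {p p₁ : CQ} (h : IsRewriteStep Sig W p p₁) :
    IsRewriteStep Sig W p (p₁.subst e) := by
  obtain ⟨σ, hσ, ρ, hinj, hfr, S, happ, γ, hmgu, hid, hpr, rfl⟩ := h
  exact ⟨σ, hσ, ρ, hinj, hfr, S, happ, e ∘ γ, hmgu.perm_comp e he, hid.perm_comp e hev,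
    hpr.perm_comp e he hev, CQ.subst_subst _ _ _⟩

include he hev in
theorem IsFactStep.subst_perm {p p₁ : CQ} (h : IsFactStep Sig W p p₁) :
    IsFactStep Sig W p (p₁.subst e) := by
  obtain ⟨σ, hσ, S, hfact, γ, hmgu, hid, hpr, rfl⟩ := h
  exact ⟨σ, hσ, S, hfact, e ∘ γ, hmgu.perm_comp e he, hid.perm_comp e hev,
    hpr.perm_comp e he hev, CQ.subst_subst _ _ _⟩

end Perm

theorem swap_null_constFix (n k : ℕ) : constFix (Equiv.swap (Term.null n) (Term.null k)) :=
  fun _ => Equiv.swap_apply_of_ne_of_ne (by simp) (by simp)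

theorem swap_null_var (n k v : ℕ) :
    Equiv.swap (Term.null n) (Term.null k) (Term.var v) = Term.var v :=
  Equiv.swap_apply_of_ne_of_ne (by simp) (by simp)

/-- If a reachable query contained a null `n`, renaming `n` to any `k` would give reachable
queries containing every `k`, and these cannot all be renamings of finitely many queries. -/
theorem Reach.nullFree {Sig : Finset TGD} {W : Finset ℕ} {q₀ p : CQ}
    (hfin : ∃ Q : Finset CQ, ∀ p, Reach Sig W q₀ p → ∃ p' ∈ Q, CQEquiv p p')
    (h₀ : q₀.NullFree) (h : Reach Sig W q₀ p) : p.NullFree := by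
  obtain ⟨Q, hQ⟩ := hfin
  have hperm : ∀ p₁ : CQ, (∀ e : Equiv.Perm Term, constFix e →
      (∀ v, e (.var v) = .var v) → Reach Sig W q₀ (p₁.subst e)) → p₁.NullFree := by
    intro p₁ hreach
    refine CQ.NullFree.of_nulls_eq_empty (Finset.eq_empty_of_forall_notMem fun n hn => ?_)
    obtain ⟨k, hk⟩ := Infinite.exists_notMem_finset (Q.sup CQ.nulls)
    obtain ⟨r, hr, hpr⟩ := hQ _ (hreach _ (swap_null_constFix n k) (swap_null_var n k))
    exact hk (Finset.mem_sup.mpr ⟨r, hr,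
      hpr.nulls_eq ▸ CQ.mem_nulls_subst (Equiv.swap_apply_left _ _) hn⟩)
  cases h with
  | refl => exact h₀
  | rw hre hstep => exact hperm _ fun e he hev => .rw hre (hstep.subst_perm e he hev)
  | fact hre hstep => exact hperm _ fun e he hev => .fact hre (hstep.subst_perm e he hev)

/-! ## Soundness of XRewrite -/

theorem TGD.mem_frontier {σ : TGD} {v : ℕ} (hv : Term.var v ∈ σ.head.args)
    (hex : v ∉ σ.exVars) : v ∈ σ.frontier := by
  simp only [TGD.exVars, Finset.mem_sdiff, not_and_not_right] at hex
  exact Finset.mem_inter.mpr ⟨hex (Atom.mem_vars.mpr hv), Atom.mem_vars.mpr hv⟩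

theorem Atom.vars_subst_renT (ρ : ℕ → ℕ) (a : Atom) :
    (a.subst (renT ρ)).vars = a.vars.image ρ := by
  ext v
  simp only [Atom.mem_vars, Finset.mem_image, Atom.subst_args, List.mem_map]
  constructor
  · rintro ⟨t, ht, he⟩
    cases t <;> simp only [renT, reduceCtorEq, Term.var.injEq] at he
    exact ⟨_, ht, he⟩
  · rintro ⟨u, hu, rfl⟩
    exact ⟨_, hu, rfl⟩

theorem varsOfSet_image_subst_renT (ρ : ℕ → ℕ) (S : Finset Atom) :
    varsOfSet (S.image (Atom.subst (renT ρ))) = (varsOfSet S).image ρ := by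
  ext v
  simp only [mem_varsOfSet, Finset.mem_image, ← Atom.mem_vars]
  constructor
  · rintro ⟨_, ⟨a, ha, rfl⟩, hv⟩
    obtain ⟨u, hu, rfl⟩ := Finset.mem_image.mp (Atom.vars_subst_renT ρ a ▸ hv)
    exact ⟨u, ⟨a, ha, hu⟩, rfl⟩
  · rintro ⟨u, ⟨a, ha, hu⟩, rfl⟩
    exact ⟨_, ⟨a, ha, rfl⟩, Atom.vars_subst_renT ρ a ▸ Finset.mem_image_of_mem ρ hu⟩

theorem TGD.exVars_rename {ρ : ℕ → ℕ} (hinj : Function.Injective ρ) (σ : TGD) :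
    (σ.rename ρ).exVars = σ.exVars.image ρ := by
  simp only [TGD.exVars, TGD.rename, Atom.vars_subst_renT, varsOfSet_image_subst_renT,
    Finset.image_sdiff _ _ hinj]

theorem TGD.exPos_rename {ρ : ℕ → ℕ} (hinj : Function.Injective ρ) (σ : TGD) (i : ℕ) :
    (σ.rename ρ).exPos i ↔ σ.exPos i := by
  unfold TGD.exPos
  rw [TGD.exVars_rename hinj]
  simp only [Finset.exists_mem_image, TGD.rename, Atom.subst_args, List.getElem?_map,
    Option.map_eq_some_iff]
  refine exists_congr fun z => and_congr_right fun _ => ⟨?_, fun h => ⟨_, h, rfl⟩⟩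
  rintro ⟨t, ht, he⟩
  cases t <;> simp only [renT, reduceCtorEq, Term.var.injEq] at he
  rwa [← hinj he]

theorem TGD.eq_of_not_exPos {σ : TGD} (hσ : ∀ t ∈ σ.head.args, t.noNull)
    {h h' : Term → Term} (hh' : constFix h') (hh : constFix h)
    (hfr : ∀ v ∈ σ.frontier, h' (.var v) = h (.var v)) {i : ℕ} {s : Term}
    (hs : σ.head.args[i]? = some s) (hi : ¬ σ.exPos i) : h' s = h s := by
  rcases Term.noNull_iff.mp (hσ s (List.mem_of_getElem? hs)) with ⟨c, rfl⟩ | ⟨f, rfl⟩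
  · rw [hh' c, hh c]
  · exact hfr f (TGD.mem_frontier (List.mem_of_getElem? hs) fun hf => hi ⟨f, hf, hs⟩)

def exTerms (σ : TGD) (S : Finset Atom) : Set Term :=
  {t | ∃ a ∈ S, ∃ i, σ.exPos i ∧ a.args[i]? = some t}

theorem Applicable.eq_of_mem_exTerms {p : CQ} {σ : TGD} {S : Finset Atom}
    (happ : Applicable p σ S) (hp : ∀ a ∈ p.body, ∀ t ∈ a.args, t.noNull) {t : Term}
    (ht : t ∈ exTerms σ S) :
    t ∉ p.head.args ∧
      ∀ b ∈ p.body, ∀ j, b.args[j]? = some t → b ∈ S ∧ σ.exPos j := by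
  obtain ⟨a, ha, i, hi, hat⟩ := ht
  obtain ⟨-, hS, -, hcond⟩ := happ
  rcases Term.noNull_iff.mp (hp a (hS ha) t (List.mem_of_getElem? hat)) with
    ⟨c, rfl⟩ | ⟨v, rfl⟩
  · exact absurd hat ((hcond a ha i hi).1 c)
  have hv := (hcond a ha i hi).2 v hat
  refine ⟨fun hh => hv (CQ.shared_of_mem_head hh (hS ha) (List.mem_of_getElem? hat)),
    fun b hb j hbj => ?_⟩
  obtain ⟨rfl, rfl⟩ := CQ.eq_of_not_shared hv (hS ha) hat hb hbj
  exact ⟨ha, hi⟩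

theorem const_notMem_exTerms {p : CQ} {σ : TGD} {S : Finset Atom} (happ : Applicable p σ S)
    (c : ℕ) : Term.const c ∉ exTerms σ S := by
  rintro ⟨a, ha, i, hi, hat⟩
  exact (happ.2.2.2 a ha i hi).1 c hat

theorem IsRewriteStep.sound {Sig : Finset TGD} {W : Finset ℕ} {I : Set Atom}
    (hsat : satSet Sig I) (hnf : ∀ σ ∈ Sig, σ.NormalForm)
    (hhead : ∀ σ ∈ Sig, ∀ t ∈ σ.head.args, t.noNull) {p p₁ : CQ}
    (hstep : IsRewriteStep Sig W p p₁) (hp : ∀ a ∈ p.body, ∀ t ∈ a.args, t.noNull)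
    {g : Term → Term} (hg : IsHom g ↑p₁.body I) :
    ∃ g', IsHom g' ↑p.body I ∧ p.head.subst g' = p₁.head.subst g := by
  obtain ⟨σ, hσ, ρ, hinj, -, S, happ, γ, hmgu, -, -, rfl⟩ := hstep
  have hγ : constFix γ := hmgu.1.1
  have hmem₁ : ∀ b ∈ (p.body \ S) ∪ (σ.rename ρ).body, (b.subst γ).subst g ∈ I :=
    fun b hb => hg.2 _ (Finset.mem_image_of_mem _ hb)
  have hbody : IsHom (g ∘ γ ∘ renT ρ) ↑σ.body I := by
    refine ⟨hg.1.comp (hγ.comp fun _ => rfl), fun b hb => ?_⟩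
    simpa only [Atom.subst_subst] using
      hmem₁ _ (Finset.mem_union_right _ (Finset.mem_image_of_mem _ hb))
  obtain ⟨h', hh'c, hh'fr, hh'I⟩ := hsat σ hσ _ hbody
  obtain ⟨z₀, hz₀⟩ := Finset.card_le_one_iff_subset_singleton.mp (hnf σ hσ).1
  let g' : Term → Term := fun t =>
    if t ∈ exTerms (σ.rename ρ) S then h' (.var z₀) else g (γ t)
  have hg' : ∀ t ∉ exTerms (σ.rename ρ) S, g' t = g (γ t) := fun t ht => if_neg ht
  have hexT := fun t => happ.eq_of_mem_exTerms hp (t := t)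
  refine ⟨g', ⟨fun c => by simp [g', const_notMem_exTerms happ, hγ c, hg.1 c],
    fun b hb => ?_⟩, ?_⟩
  · by_cases hbS : b ∈ S
    · suffices b.subst g' = σ.head.subst h' from this ▸ hh'I
      have hu := Atom.subst_eq_subst_iff.mp (hmgu.1.2 b (Finset.mem_union_left _ hbS) _
        (Finset.mem_union_right _ (Finset.mem_singleton_self _)))
      refine Atom.subst_eq_subst_iff.mpr ⟨hu.1, fun i => ?_⟩
      have hui := hu.2 i
      simp only [TGD.rename, Atom.subst_args, List.getElem?_map, Option.map_map] at hui
      cases hbi : b.args[i]? <;> cases hsi : σ.head.args[i]? <;>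
        simp only [hbi, hsi, Option.map_none, Option.map_some, reduceCtorEq,
          Option.some.injEq] at hui ⊢
      rename_i u s
      by_cases hi : σ.exPos i
      · obtain ⟨z, hz, hzi⟩ := hi
        rw [hsi, Option.some.injEq] at hzi
        rw [hzi, Finset.mem_singleton.mp (hz₀ hz)]
        exact if_pos
          ⟨b, hbS, i, (TGD.exPos_rename hinj σ i).mpr ⟨z, hz, hsi ▸ hzi ▸ rfl⟩, hbi⟩
      · rw [TGD.eq_of_not_exPos (hhead σ hσ) hh'c hbody.1 hh'fr hsi hi,
          hg' u fun hu => hi ((TGD.exPos_rename hinj σ i).mp ((hexT u hu).2 b hb i hbi).2)]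
        exact congrArg g hui
    · rw [show b.subst g' = (b.subst γ).subst g from ?_]
      · exact hmem₁ b (Finset.mem_union_left _ (Finset.mem_sdiff.mpr ⟨hb, hbS⟩))
      rw [Atom.subst_subst]
      refine Atom.subst_congr fun t ht => hg' t fun hT => hbS ?_
      obtain ⟨j, hj⟩ := List.mem_iff_getElem?.mp ht
      exact ((hexT t hT).2 b hb j hj).1
  · rw [CQ.subst_head, Atom.subst_subst]
    exact Atom.subst_congr fun t ht => hg' t fun hT => (hexT t hT).1 ht

theorem IsFactStep.sound {Sig : Finset TGD} {W : Finset ℕ} {I : Set Atom} {p p₁ : CQ}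
    (hstep : IsFactStep Sig W p p₁) {g : Term → Term} (hg : IsHom g ↑p₁.body I) :
    ∃ g', IsHom g' ↑p.body I ∧ p.head.subst g' = p₁.head.subst g := by
  obtain ⟨_, -, _, -, γ, hmgu, -, -, rfl⟩ := hstep
  refine ⟨g ∘ γ, ⟨hg.1.comp hmgu.1.1, fun a ha => ?_⟩, (Atom.subst_subst _ _ _).symm⟩
  rw [← Atom.subst_subst]
  exact hg.2 _ (Finset.mem_image_of_mem _ ha)

theorem Reach.of_mem_xRewriteOut {Sig : Finset TGD} {W : Finset ℕ} {q₀ p : CQ}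
    (h : p ∈ XRewriteOut Sig W q₀) : Reach Sig W q₀ p := by
  rcases h with rfl | ⟨p₀, hre, hstep⟩
  exacts [.refl, .rw hre hstep]

theorem Reach.sound {Sig : Finset TGD} {W : Finset ℕ} {I : Set Atom} (hsat : satSet Sig I)
    (hnf : ∀ σ ∈ Sig, σ.NormalForm) (hhead : ∀ σ ∈ Sig, ∀ t ∈ σ.head.args, t.noNull)
    {q₀ p : CQ} (hfin : ∃ Q : Finset CQ, ∀ p, Reach Sig W q₀ p → ∃ p' ∈ Q, CQEquiv p p')
    (h₀ : q₀.NullFree) (hre : Reach Sig W q₀ p) {g : Term → Term}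
    (hg : IsHom g ↑p.body I) :
    ∃ g', IsHom g' ↑q₀.body I ∧ q₀.head.subst g' = p.head.subst g := by
  induction hre generalizing g with
  | refl => exact ⟨g, hg, rfl⟩
  | rw hre hstep ih =>
    obtain ⟨g₁, hg₁, hhead₁⟩ := hstep.sound hsat hnf hhead (hre.nullFree hfin h₀).2 hg
    obtain ⟨g', hg', hhead'⟩ := ih hg₁
    exact ⟨g', hg', hhead'.trans hhead₁⟩
  | fact _ hstep ih =>
    obtain ⟨g₁, hg₁, hhead₁⟩ := hstep.sound hg
    obtain ⟨g', hg', hhead'⟩ := ih hg₁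
    exact ⟨g', hg', hhead'.trans hhead₁⟩

/-! ## The chase -/

def TGD.NullFree (σ : TGD) : Prop :=
  (∀ b ∈ σ.body, ∀ t ∈ b.args, t.noNull) ∧ ∀ t ∈ σ.head.args, t.noNull

theorem TGD.overSchema.nullFree {R : Schema} {σ : TGD} (h : σ.overSchema R) : σ.NullFree :=
  ⟨fun b hb => (h.2.1 b hb).2, h.2.2.2⟩

theorem TGD.head_term_cases {σ : TGD} (hσ : σ.NullFree) {t : Term} (ht : t ∈ σ.head.args) :
    (∃ c, t = .const c) ∨ (∃ z ∈ σ.exVars, t = .var z) ∨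
      ∃ b ∈ σ.body, t ∈ b.args := by
  rcases Term.noNull_iff.mp (hσ.2 t ht) with hc | ⟨z, rfl⟩
  · exact Or.inl hc
  by_cases hz : z ∈ σ.exVars
  · exact Or.inr (Or.inl ⟨z, hz, rfl⟩)
  · obtain ⟨b, hb, hzb⟩ := mem_varsOfSet.mp (Finset.mem_inter.mp (TGD.mem_frontier ht hz)).1
    exact Or.inr (Or.inr ⟨b, hb, hzb⟩)

instance : Countable Term := by
  refine Function.Injective.countable (f := fun t : Term => match t with
    | .const c => (0, c) | .null n => (1, n) | .var v => (2, v)) ?_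
  intro s t h
  cases s <;> cases t <;> simp_all

instance : Countable Atom :=
  Function.Injective.countable (f := fun a : Atom => (a.pred, a.args)) fun _ _ h =>
    Atom.ext' (congrArg Prod.fst h) (congrArg Prod.snd h)

instance : Countable TGD := by
  refine Function.Injective.countable (f := fun σ : TGD => (σ.body, σ.head)) ?_
  rintro ⟨⟩ ⟨⟩ h
  simp_all

def bodyImage (σ : TGD) (h : Term → Term) : List Term :=
  ((varsOfSet σ.body).sort (· ≤ ·)).map (h ∘ Term.var)

/-- The chase names the null it invents for a firing by an injective code of the firing: the
TGD, the images of its body variables and the stage. -/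
noncomputable def triggerCode : TGD × List Term × ℕ → ℕ := (exists_injective_nat _).choose

noncomputable def freshNull (σ : TGD) (h : Term → Term) (n : ℕ) : ℕ :=
  triggerCode (σ, bodyImage σ h, n)

theorem freshNull_inj {σ σ' : TGD} {h h' : Term → Term} {n n' : ℕ}
    (he : freshNull σ h n = freshNull σ' h' n') :
    σ = σ' ∧ n = n' ∧ ∀ v ∈ varsOfSet σ.body, h (.var v) = h' (.var v) := by
  simp only [freshNull] at he
  have htrig : (σ, bodyImage σ h, n) = (σ', bodyImage σ' h', n') :=
    (exists_injective_nat _).choose_spec he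
  simp only [Prod.mk.injEq] at htrig
  obtain ⟨rfl, himg, rfl⟩ := htrig
  refine ⟨rfl, rfl, fun v hv => ?_⟩
  exact List.map_inj_left.mp himg v ((Finset.mem_sort _).mpr hv)

noncomputable def fireSubst (σ : TGD) (h : Term → Term) (n : ℕ) : Term → Term := fun t =>
  match t with
  | .var z => if z ∈ σ.exVars then .null (freshNull σ h n) else h t
  | t => h t

theorem fireSubst_exVar {σ : TGD} (h : Term → Term) (n : ℕ) {z : ℕ} (hz : z ∈ σ.exVars) :
    fireSubst σ h n (.var z) = .null (freshNull σ h n) := if_pos hz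

theorem fireSubst_of_mem_body {σ : TGD} (h : Term → Term) (n : ℕ) {b : Atom}
    (hb : b ∈ σ.body) {t : Term} (ht : t ∈ b.args) : fireSubst σ h n t = h t := by
  cases t with
  | var z =>
    refine if_neg fun hz => (Finset.mem_sdiff.mp hz).2 (mem_varsOfSet.mpr ⟨b, hb, ht⟩)
  | _ => rfl

theorem fireSubst_const {σ : TGD} {h : Term → Term} (hh : constFix h) (n : ℕ) :
    constFix (fireSubst σ h n) := hh

theorem fireSubst_head_congr {σ : TGD} (hσ : σ.NullFree) {h h' : Term → Term}
    (hh : constFix h) (hh' : constFix h') (n : ℕ)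
    (he : ∀ v ∈ varsOfSet σ.body, h (.var v) = h' (.var v)) :
    σ.head.subst (fireSubst σ h n) = σ.head.subst (fireSubst σ h' n) := by
  have hbi : bodyImage σ h = bodyImage σ h' :=
    List.map_inj_left.mpr fun v hv => he v ((Finset.mem_sort _).mp hv)
  refine Atom.subst_congr fun t ht => ?_
  rcases σ.head_term_cases hσ ht with ⟨c, rfl⟩ | ⟨z, hz, rfl⟩ | ⟨b, hb, htb⟩
  · exact (hh c).trans (hh' c).symm
  · simp only [fireSubst_exVar _ _ hz, freshNull, hbi]
  · rw [fireSubst_of_mem_body h n hb htb, fireSubst_of_mem_body h' n hb htb]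
    obtain ⟨c, rfl⟩ | ⟨v, rfl⟩ := Term.noNull_iff.mp (hσ.1 b hb t htb)
    · exact (hh c).trans (hh' c).symm
    · exact he v (mem_varsOfSet.mpr ⟨b, hb, htb⟩)

section Chase

variable (Sig : Finset TGD) (D : Finset Atom)

def chaseStep (X : Set Atom) (n : ℕ) : Set Atom :=
  {A | ∃ σ ∈ Sig, ∃ h, IsHom h ↑σ.body X ∧ A = σ.head.subst (fireSubst σ h n)}

def chaseStage : ℕ → Set Atom
  | 0 => ↑D
  | n + 1 => chaseStage n ∪ chaseStep Sig (chaseStage n) n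

def chase : Set Atom := ⋃ n, chaseStage Sig D n

noncomputable def chaseLevel (a : Atom) : ℕ := sInf {m | a ∈ chaseStage Sig D m}

variable {Sig D}

theorem chaseStage_mono : Monotone (chaseStage Sig D) :=
  monotone_nat_of_le_succ fun _ => Set.subset_union_left

theorem chaseStage_subset_chase (m : ℕ) : chaseStage Sig D m ⊆ chase Sig D :=
  Set.subset_iUnion (chaseStage Sig D) m

theorem mem_chaseStage_chaseLevel {a : Atom} (ha : a ∈ chase Sig D) :
    a ∈ chaseStage Sig D (chaseLevel Sig D a) :=
  Nat.sInf_mem (Set.mem_iUnion.mp ha)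

theorem chaseLevel_le {a : Atom} {m : ℕ} (ha : a ∈ chaseStage Sig D m) :
    chaseLevel Sig D a ≤ m :=
  Nat.sInf_le ha

theorem subset_chase : ↑D ⊆ chase Sig D := chaseStage_subset_chase 0

theorem chase_sat : satSet Sig (chase Sig D) := by
  intro σ hσ h hh
  set n := σ.body.sup fun b => chaseLevel Sig D (b.subst h)
  have hbody : IsHom h ↑σ.body (chaseStage Sig D n) := ⟨hh.1, fun b hb =>
    chaseStage_mono (Finset.le_sup (f := fun b => chaseLevel Sig D (b.subst h)) hb)
      (mem_chaseStage_chaseLevel (hh.2 b hb))⟩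
  refine ⟨fireSubst σ h n, hh.1, fun v hv => ?_, chaseStage_subset_chase (n + 1)
    (Or.inr ⟨σ, hσ, h, hbody, rfl⟩)⟩
  exact if_neg fun hz => (Finset.mem_sdiff.mp hz).2 (Finset.mem_inter.mp hv).1

variable (hD : ∀ a ∈ D, ∀ t ∈ a.args, ∃ c, t = Term.const c)
  (hSig : ∀ σ ∈ Sig, σ.NullFree)
include hD hSig

theorem chase_args_cases {a : Atom} (ha : a ∈ chase Sig D) {t : Term} (ht : t ∈ a.args) :
    (∃ c, t = .const c) ∨ ∃ σ ∈ Sig, ∃ h k, t = .null (freshNull σ h k) := by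
  obtain ⟨m, hm⟩ := Set.mem_iUnion.mp ha
  clear ha
  induction m generalizing a t with
  | zero => exact Or.inl (hD a hm t ht)
  | succ m ih =>
    rcases hm with ha | ⟨σ, hσ, h, hh, rfl⟩
    · exact ih ht ha
    obtain ⟨s, hs, rfl⟩ := List.mem_map.mp ht
    rcases σ.head_term_cases (hSig σ hσ) hs with
      ⟨c, rfl⟩ | ⟨z, hz, rfl⟩ | ⟨b, hb, hsb⟩
    · exact Or.inl ⟨c, hh.1 c⟩
    · exact Or.inr ⟨σ, hσ, h, m, fireSubst_exVar h m hz⟩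
    · rw [fireSubst_of_mem_body h m hb hsb]
      exact ih (List.mem_map_of_mem (f := h) hsb) (hh.2 b hb)

theorem affectedPos_of_freshNull {a : Atom} (ha : a ∈ chase Sig D) {σ : TGD} {h : Term → Term}
    {k j : ℕ} (hj : a.args[j]? = some (.null (freshNull σ h k))) :
    AffectedPos Sig σ (a.pred, j) := by
  obtain ⟨m, hm⟩ := Set.mem_iUnion.mp ha
  clear ha
  induction m generalizing a j with
  | zero =>
    obtain ⟨c, hc⟩ := hD a hm _ (List.mem_of_getElem? hj)
    exact absurd hc (by simp)
  | succ m ih =>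
    rcases hm with ha | ⟨σ₂, hσ₂, h₂, hh₂, rfl⟩
    · exact ih hj ha
    simp only [Atom.subst_args, List.getElem?_map, Option.map_eq_some_iff] at hj
    obtain ⟨s, hs, he⟩ := hj
    rcases σ₂.head_term_cases (hSig σ₂ hσ₂) (List.mem_of_getElem? hs) with
      ⟨c, rfl⟩ | ⟨z, hz, rfl⟩ | ⟨b, hb, hsb⟩
    · exact absurd ((hh₂.1 c).symm.trans he) (by simp)
    · rw [fireSubst_exVar h₂ m hz, Term.null.injEq] at he
      obtain ⟨rfl, -⟩ := freshNull_inj he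
      exact .base ⟨z, hz, hs⟩
    · rw [fireSubst_of_mem_body h₂ m hb hsb] at he
      obtain ⟨c, rfl⟩ | ⟨v, rfl⟩ := Term.noNull_iff.mp ((hSig σ₂ hσ₂).1 b hb s hsb)
      · exact absurd ((hh₂.1 c).symm.trans he) (by simp)
      refine .step hσ₂ hs (mem_varsOfSet.mpr ⟨b, hb, hsb⟩) fun b' hb' j' hj' => ?_
      exact ih (a := b'.subst h₂) (j := j') (by simp [hj', he]) (hh₂.2 b' hb')

theorem lt_of_freshNull_mem {m : ℕ} {a : Atom} (ha : a ∈ chaseStage Sig D m) {σ : TGD}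
    {h : Term → Term} {k : ℕ} (hk : .null (freshNull σ h k) ∈ a.args) : k < m := by
  induction m generalizing a with
  | zero =>
    obtain ⟨c, hc⟩ := hD a ha _ hk
    exact absurd hc (by simp)
  | succ m ih =>
    rcases ha with ha | ⟨σ₂, hσ₂, h₂, hh₂, rfl⟩
    · exact (ih ha hk).trans (Nat.lt_succ_self m)
    obtain ⟨s, hs, he⟩ := List.mem_map.mp hk
    rcases σ₂.head_term_cases (hSig σ₂ hσ₂) hs with
      ⟨c, rfl⟩ | ⟨z, hz, rfl⟩ | ⟨b, hb, hsb⟩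
    · exact absurd ((hh₂.1 c).symm.trans he) (by simp)
    · rw [fireSubst_exVar h₂ m hz, Term.null.injEq] at he
      exact (freshNull_inj he).2.1 ▸ Nat.lt_succ_self m
    · rw [fireSubst_of_mem_body h₂ m hb hsb] at he
      exact (ih (hh₂.2 b hb) (he ▸ List.mem_map_of_mem (f := h₂) hsb)).trans
        (Nat.lt_succ_self m)

theorem eq_of_freshNull_mem {σ : TGD} (hσ : σ ∈ Sig) {h : Term → Term} (hh : constFix h)
    {n : ℕ} {a : Atom} (ha : a ∈ chaseStage Sig D (n + 1))
    (hN : .null (freshNull σ h n) ∈ a.args) : a = σ.head.subst (fireSubst σ h n) := by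
  rcases ha with ha | ⟨σ₂, hσ₂, h₂, hh₂, rfl⟩
  · exact absurd (lt_of_freshNull_mem hD hSig ha hN) (lt_irrefl n)
  obtain ⟨s, hs, he⟩ := List.mem_map.mp hN
  rcases σ₂.head_term_cases (hSig σ₂ hσ₂) hs with
    ⟨c, rfl⟩ | ⟨z, hz, rfl⟩ | ⟨b, hb, hsb⟩
  · exact absurd ((hh₂.1 c).symm.trans he) (by simp)
  · rw [fireSubst_exVar h₂ n hz, Term.null.injEq] at he
    obtain ⟨rfl, -, hagree⟩ := freshNull_inj he
    exact fireSubst_head_congr (hSig σ₂ hσ) hh₂.1 hh n hagree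
  · rw [fireSubst_of_mem_body h₂ n hb hsb] at he
    exact absurd (lt_of_freshNull_mem hD hSig (hh₂.2 b hb)
      (he ▸ List.mem_map_of_mem (f := h₂) hsb)) (lt_irrefl n)

theorem exPos_of_freshNull {σ : TGD} (hσ : σ ∈ Sig) {h : Term → Term} {n j : ℕ}
    (hh : IsHom h ↑σ.body (chaseStage Sig D n))
    (hj : (σ.head.subst (fireSubst σ h n)).args[j]? = some (.null (freshNull σ h n))) :
    σ.exPos j := by
  simp only [Atom.subst_args, List.getElem?_map, Option.map_eq_some_iff] at hj
  obtain ⟨s, hs, he⟩ := hj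
  rcases σ.head_term_cases (hSig σ hσ) (List.mem_of_getElem? hs) with
    ⟨c, rfl⟩ | ⟨z, hz, rfl⟩ | ⟨b, hb, hsb⟩
  · exact absurd ((hh.1 c).symm.trans he) (by simp)
  · exact ⟨z, hz, hs⟩
  · rw [fireSubst_of_mem_body h n hb hsb] at he
    exact absurd (lt_of_freshNull_mem hD hSig (hh.2 b hb) (he ▸ List.mem_map_of_mem (f := h) hsb))
      (lt_irrefl n)

end Chase

/-! ## Completeness of XRewrite -/

def topCount (B : Finset Atom) (f : Atom → ℕ) : ℕ := (B.filter (f · = B.sup f)).card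

def levelMeasure (B : Finset Atom) (f : Atom → ℕ) : ℕ × ℕ × ℕ :=
  (B.sup f, topCount B f, B.card)

def MeasureLT : ℕ × ℕ × ℕ → ℕ × ℕ × ℕ → Prop :=
  Prod.Lex (· < ·) (Prod.Lex (· < ·) (· < ·))

theorem measureLT_wf : WellFounded MeasureLT :=
  WellFounded.prod_lex wellFounded_lt (WellFounded.prod_lex wellFounded_lt wellFounded_lt)

theorem levelMeasure_image_lt {B : Finset Atom} {f f₁ : Atom → ℕ} {g : Atom → Atom}
    (hf : ∀ x ∈ B, f₁ (g x) = f x) (hg : ¬ Set.InjOn g B) :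
    (B.image g).sup f₁ = B.sup f ∧
      MeasureLT (levelMeasure (B.image g) f₁) (levelMeasure B f) := by
  have hsup : (B.image g).sup f₁ = B.sup f := by
    rw [Finset.sup_image]
    exact Finset.sup_congr rfl hf
  have hcount : topCount (B.image g) f₁ ≤ topCount B f := by
    refine (Finset.card_le_card fun y hy => ?_).trans (Finset.card_image_le (f := g))
    obtain ⟨hy, hfy⟩ := Finset.mem_filter.mp hy
    obtain ⟨x, hx, rfl⟩ := Finset.mem_image.mp hy
    exact Finset.mem_image_of_mem g (Finset.mem_filter.mpr ⟨hx, by rw [← hf x hx, hfy, hsup]⟩)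
  have hcard : (B.image g).card < B.card :=
    lt_of_le_of_ne Finset.card_image_le fun h => hg (Finset.card_image_iff.mp h)
  refine ⟨hsup, ?_⟩
  unfold MeasureLT levelMeasure
  rw [hsup]
  refine .right _ ?_
  rcases hcount.lt_or_eq with h | h
  exacts [.left _ _ h, h ▸ .right _ hcard]

theorem levelMeasure_lt_of_replace {B B₁ S : Finset Atom} {f f₁ : Atom → ℕ}
    {g : Atom → Atom}
    (hS : S ⊆ B) (hSne : S.Nonempty) (hSf : ∀ x ∈ S, f x = B.sup f)
    (hB₁ : ∀ y ∈ B₁, f₁ y < B.sup f ∨ ∃ x ∈ B \ S, g x = y ∧ f₁ y = f x) :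
    MeasureLT (levelMeasure B₁ f₁) (levelMeasure B f) := by
  have hle : B₁.sup f₁ ≤ B.sup f := Finset.sup_le fun y hy => by
    rcases hB₁ y hy with h | ⟨x, hx, -, h⟩
    exacts [h.le, h ▸ Finset.le_sup (Finset.mem_sdiff.mp hx).1]
  rcases hle.lt_or_eq with hlt | heq
  · exact .left _ _ hlt
  unfold MeasureLT levelMeasure
  rw [heq]
  refine .right _ (.left _ _ ?_)
  have hSt : S ⊆ B.filter (f · = B.sup f) := fun x hx =>
    Finset.mem_filter.mpr ⟨hS hx, hSf x hx⟩
  calc topCount B₁ f₁ ≤ ((B.filter (f · = B.sup f) \ S).image g).card := by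
        refine Finset.card_le_card fun y hy => ?_
        obtain ⟨hy, hfy⟩ := Finset.mem_filter.mp hy
        rcases hB₁ y hy with h | ⟨x, hx, rfl, h⟩
        · exact absurd (hfy ▸ heq ▸ h) (lt_irrefl _)
        · obtain ⟨hxB, hxS⟩ := Finset.mem_sdiff.mp hx
          exact Finset.mem_image_of_mem g (Finset.mem_sdiff.mpr
            ⟨Finset.mem_filter.mpr ⟨hxB, by rw [← h, hfy, heq]⟩, hxS⟩)
    _ ≤ (B.filter (f · = B.sup f)).card - S.card := by
        rw [← Finset.card_sdiff_of_subset hSt]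
        exact Finset.card_image_le
    _ < topCount B f := Nat.sub_lt (hSne.card_pos.trans_le (Finset.card_le_card hSt))
        hSne.card_pos

theorem factorizable_of_subst_eq {p : CQ} {σ : TGD} (hnf : σ.NormalForm) {μ : Term → Term}
    (hμ : constFix μ) {A : Atom} {N : Term} {v : ℕ} (hv : p.shared v)
    (hvhead : .var v ∉ p.head.args) (hμv : μ (.var v) = N)
    (hA : ∀ b ∈ p.body, .var v ∈ b.args → b.subst μ = A)
    (hN : ∀ j, A.args[j]? = some N → σ.exPos j) (hex : ∃ i, σ.exPos i) :
    Factorizable p σ (p.body.filter (.var v ∈ ·.args)) := by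
  set S := p.body.filter (.var v ∈ ·.args)
  have hpos : ∀ b ∈ S, ∀ j, b.args[j]? = some (.var v) → σ.exPos j := fun b hb j hj => by
    refine hN j ?_
    rw [← hA b (Finset.mem_filter.mp hb).1 (Finset.mem_filter.mp hb).2]
    simp [hj, hμv]
  have hcount : ∀ b ∈ S, b.countVar v ≤ 1 := fun b hb => by
    by_contra h
    obtain ⟨i, j, hij, hi, hj⟩ :=
      List.two_le_count_iff_exists_getElem?.mp (Nat.lt_of_not_le h)
    exact hij (TGD.exPos_unique hnf (hpos b hb i hi) (hpos b hb j hj))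
  have hcard : 2 ≤ S.card := by
    have hsum : ∑ b ∈ p.body, b.countVar v = ∑ b ∈ S, b.countVar v :=
      (Finset.sum_filter_of_ne fun b _ h => List.count_pos_iff.mp (Nat.pos_of_ne_zero h)).symm
    have := Finset.sum_le_card_nsmul S _ 1 hcount
    have h0 : p.head.countVar v = 0 := List.count_eq_zero.mpr hvhead
    unfold CQ.shared CQ.countVar at hv
    simp only [smul_eq_mul, mul_one] at this
    omega
  refine ⟨Finset.filter_subset _ _, hcard,
    ⟨μ, isUnifier_of_forall_subst_eq hμ fun b hb => hA b (Finset.mem_filter.mp hb).1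
      (Finset.mem_filter.mp hb).2⟩, hex, v, fun hvS => ?_, fun b hb => ⟨?_, hpos b hb⟩⟩
  · obtain ⟨b, hb, hvb⟩ := mem_varsOfSet.mp hvS
    obtain ⟨hbq, hbS⟩ := Finset.mem_sdiff.mp hb
    exact hbS (Finset.mem_filter.mpr ⟨hbq, hvb⟩)
  · obtain ⟨j, hj⟩ := List.mem_iff_getElem?.mp (Finset.mem_filter.mp hb).2
    exact ⟨j, hpos b hb j hj, hj⟩

theorem exists_rename_apart {ι : Type*} [Countable ι] (V : Finset ℕ) (μ : Term → Term)
    (hμ : constFix μ) (f : ι → Term → Term) :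
    ∃ ρ : ι → ℕ → ℕ, (∀ i j v w, ρ i v = ρ j w → i = j ∧ v = w) ∧
      (∀ i v, ρ i v ∉ V) ∧ ∃ Φ : Term → Term, constFix Φ ∧
        (∀ t, (∀ v, t = .var v → v ∈ V) → Φ t = μ t) ∧
        ∀ i w, Φ (.var (ρ i w)) = f i (.var w) := by
  obtain ⟨enc, henc⟩ := exists_injective_nat ι
  set M := V.sup id + 1
  let ρ : ι → ℕ → ℕ := fun i v => M + Nat.pair (enc i) v
  have hρ : ∀ i j v w, ρ i v = ρ j w → i = j ∧ v = w := fun i j v w h => by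
    have := Nat.pair_eq_pair.mp (Nat.add_left_cancel h)
    exact ⟨henc this.1, this.2⟩
  have hV : ∀ v ∈ V, v < M := fun v hv => Nat.lt_succ_of_le (Finset.le_sup (f := id) hv)
  have hρM : ∀ i v, M ≤ ρ i v := fun _ _ => Nat.le_add_right _ _
  let Φ : Term → Term := fun t => match t with
    | .var u =>
      if h : ∃ x : ι × ℕ, ρ x.1 x.2 = u then f h.choose.1 (.var h.choose.2) else μ t
    | t => μ t
  have hΦ : ∀ t, (∀ v, t = .var v → v ∈ V) → Φ t = μ t := by
    intro t ht
    cases t with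
    | var u =>
      refine dif_neg ?_
      rintro ⟨x, hx⟩
      exact absurd (hV u (ht u rfl)) (hx ▸ (hρM _ _).not_gt)
    | _ => rfl
  refine ⟨ρ, hρ, fun i v hv => absurd (hV _ hv) (hρM i v).not_gt, Φ,
    fun c => (hΦ _ (by simp)).trans (hμ c), hΦ, fun i w => ?_⟩
  have hex : ∃ x : ι × ℕ, ρ x.1 x.2 = ρ i w := ⟨(i, w), rfl⟩
  obtain ⟨h₁, h₂⟩ := hρ _ _ _ _ hex.choose_spec
  exact (dif_pos hex).trans (by rw [h₁, h₂])

theorem subst_renT_subst {ρ : ℕ → ℕ} {Θ f : Term → Term} (hΘ : constFix Θ)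
    (hf : constFix f)
    (hρ : ∀ w, Θ (.var (ρ w)) = f (.var w)) {b : Atom} (hb : ∀ t ∈ b.args, t.noNull) :
    (b.subst (renT ρ)).subst Θ = b.subst f := by
  rw [Atom.subst_subst]
  refine Atom.subst_congr fun t ht => ?_
  obtain ⟨c, rfl⟩ | ⟨w, rfl⟩ := Term.noNull_iff.mp (hb t ht)
  exacts [(hΘ c).trans (hf c).symm, hρ w]

section Completeness

variable {Sig : Finset TGD} {D : Finset Atom}

def ChaseMatch (Sig : Finset TGD) (D : Finset Atom) (p : CQ) (μ : Term → Term) : Prop :=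
  constFix μ ∧ (∀ a ∈ p.body, a.subst μ ∈ chase Sig D) ∧
    ∀ t ∈ p.head.args, ∃ c, μ t = .const c

noncomputable abbrev imageLevel (Sig : Finset TGD) (D : Finset Atom) (μ : Term → Term)
    (a : Atom) : ℕ :=
  chaseLevel Sig D (a.subst μ)

theorem ChaseMatch.subst_of_comp_eq {p : CQ} {μ γ : Term → Term} (hm : ChaseMatch Sig D p μ)
    (hγ : μ ∘ γ = μ) : ChaseMatch Sig D (p.subst γ) μ := by
  refine ⟨hm.1, fun a ha => ?_, fun t ht => ?_⟩
  · obtain ⟨x, hx, rfl⟩ := Finset.mem_image.mp ha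
    rw [Atom.subst_subst, hγ]
    exact hm.2.1 x hx
  · obtain ⟨s, hs, rfl⟩ := List.mem_map.mp ht
    obtain ⟨c, hc⟩ := hm.2.2 s hs
    exact ⟨c, (congrFun hγ s).trans hc⟩

theorem ChaseMatch.exists_top_firing {p : CQ} {μ : Term → Term} (hm : ChaseMatch Sig D p μ)
    {n : ℕ} (hn : p.body.sup (imageLevel Sig D μ) = n + 1) :
    ∃ a₀ ∈ p.body, a₀.subst μ ∈ chaseStage Sig D (n + 1) ∧
      imageLevel Sig D μ a₀ = n + 1 ∧
        ∃ σ ∈ Sig, ∃ h, IsHom h ↑σ.body (chaseStage Sig D n) ∧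
          a₀.subst μ = σ.head.subst (fireSubst σ h n) := by
  have hne : p.body.Nonempty := Finset.nonempty_iff_ne_empty.mpr fun h => by simp [h] at hn
  obtain ⟨a₀, ha₀, hsup⟩ := Finset.exists_mem_eq_sup _ hne (imageLevel Sig D μ)
  have hlev : imageLevel Sig D μ a₀ = n + 1 := hsup ▸ hn
  have hmem : a₀.subst μ ∈ chaseStage Sig D (n + 1) :=
    hlev ▸ mem_chaseStage_chaseLevel (hm.2.1 a₀ ha₀)
  refine ⟨a₀, ha₀, hmem, hlev, ?_⟩
  rcases hmem with hmem | hnew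
  · have : chaseLevel Sig D (a₀.subst μ) = n + 1 := hlev
    exact absurd (chaseLevel_le hmem) (this ▸ Nat.not_succ_le_self n)
  · obtain ⟨σ, hσ, h, hh, he⟩ := hnew
    exact ⟨σ, hσ, h, hh, he⟩

theorem exists_factStep_of_isUnifier {p : CQ} {σ : TGD} (hσ : σ ∈ Sig) {S : Finset Atom}
    (hfact : Factorizable p σ S) {μ : Term → Term} (hμ : IsUnifier μ S) :
    ∃ γ, IsFactStep Sig ∅ p (p.subst γ) ∧ μ ∘ γ = μ ∧
      ¬ Set.InjOn (Atom.subst γ) ↑p.body := by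
  obtain ⟨γ, hmgu, hid, habs⟩ := exists_mgu_comp_eq hfact.2.2.1
  refine ⟨γ,
    ⟨σ, hσ, S, hfact, γ, hmgu, hid, fun v hv => absurd hv (Finset.notMem_empty v), rfl⟩,
    habs μ hμ, fun hinj => ?_⟩
  obtain ⟨a, ha, b, hb, hab⟩ := Finset.one_lt_card.mp hfact.2.1
  exact hab (hinj (hfact.1 ha) (hfact.1 hb) (hmgu.1.2 a ha b hb))

theorem ChaseMatch.exists_unifier_of_firing (hSig : ∀ σ ∈ Sig, σ.NullFree) {p : CQ}
    {μ : Term → Term} (hm : ChaseMatch Sig D p μ) {σ : TGD} (hσ : σ ∈ Sig) {h : Term → Term}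
    (hh : constFix h) {n : ℕ} {S : Finset Atom} (hSp : S ⊆ p.body)
    (hSA : ∀ a ∈ S, a.subst μ = σ.head.subst (fireSubst σ h n)) :
    ∃ ρ : ℕ → ℕ, Function.Injective ρ ∧ (∀ v, ρ v ∉ p.vars) ∧ ∃ Φ,
      IsUnifier Φ (S ∪ {(σ.rename ρ).head}) ∧ (∀ t, (∀ v, t = .var v → v ∈ p.vars) → Φ t = μ t) ∧
      ∀ b ∈ σ.body, (b.subst (renT ρ)).subst Φ = b.subst h := by
  obtain ⟨ρ, hρ, hρV, Φ, hΦc, hΦμ, hΦρ⟩ :=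
    exists_rename_apart p.vars μ hm.1 fun _ : Unit => fireSubst σ h n
  have hren : ∀ b : Atom, (∀ t ∈ b.args, t.noNull) →
      (b.subst (renT (ρ ()))).subst Φ = b.subst (fireSubst σ h n) := fun b =>
    subst_renT_subst hΦc (fireSubst_const hh n) (hΦρ ())
  refine ⟨ρ (), fun v w e => (hρ () () v w e).2, hρV (), Φ, ?_, hΦμ, fun b hb => ?_⟩
  · refine isUnifier_of_forall_subst_eq (A := σ.head.subst (fireSubst σ h n)) hΦc
      fun x hx => ?_
    rcases Finset.mem_union.mp hx with hx | hx
    · rw [← hSA x hx]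
      exact Atom.subst_congr fun t ht =>
        hΦμ t fun v hv => CQ.mem_vars_of_mem_body (hSp hx) (hv ▸ ht)
    · exact (Finset.mem_singleton.mp hx).symm ▸ hren σ.head (hSig σ hσ).2
  · rw [hren b ((hSig σ hσ).1 b hb)]
    exact Atom.subst_congr fun t ht => fireSubst_of_mem_body h n hb ht

theorem applicable_of_subst_eq_fire {p : CQ} {μ : Term → Term} (hμ : constFix μ) {σ : TGD}
    {ρ : ℕ → ℕ} (hinj : Function.Injective ρ) {h : Term → Term} {n : ℕ} {S : Finset Atom}
    (hSp : S ⊆ p.body) (hSne : S.Nonempty) (hU : Unifies (S ∪ {(σ.rename ρ).head}))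
    (hSA : ∀ a ∈ S, a.subst μ = σ.head.subst (fireSubst σ h n))
    (hunsh : ∀ a ∈ S, ∀ i v, σ.exPos i → a.args[i]? = some (.var v) → ¬ p.shared v) :
    Applicable p (σ.rename ρ) S := by
  refine ⟨hSne, hSp, hU, fun a ha i hi => ?_⟩
  rw [TGD.exPos_rename hinj] at hi
  refine ⟨fun c hc => ?_, fun v hv => hunsh a ha i v hi hv⟩
  obtain ⟨z, hz, hzi⟩ := hi
  have := congrArg (·.args[i]?) (hSA a ha)
  simp [hc, hzi, hμ c, fireSubst_exVar h n hz] at this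

theorem ChaseMatch.exists_rewriteStep (hSig : ∀ σ ∈ Sig, σ.NullFree) {p : CQ}
    {μ : Term → Term} (hm : ChaseMatch Sig D p μ) {σ : TGD} (hσ : σ ∈ Sig)
    {h : Term → Term} {n : ℕ}
    (hh : IsHom h ↑σ.body (chaseStage Sig D n)) {S : Finset Atom} (hSp : S ⊆ p.body)
    (hSne : S.Nonempty) (hSA : ∀ a ∈ S, a.subst μ = σ.head.subst (fireSubst σ h n))
    (hunsh : ∀ a ∈ S, ∀ i v, σ.exPos i → a.args[i]? = some (.var v) → ¬ p.shared v) :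
    ∃ p₁ Φ, ∃ g : Atom → Atom, IsRewriteStep Sig ∅ p p₁ ∧ ChaseMatch Sig D p₁ Φ ∧
      p₁.head.subst Φ = p.head.subst μ ∧ ∀ y ∈ p₁.body, imageLevel Sig D Φ y ≤ n ∨
        ∃ x ∈ p.body \ S, g x = y ∧ y.subst Φ = x.subst μ := by
  obtain ⟨ρ, hinj, hρV, Φ, hU, hΦμ, hΦσ⟩ := hm.exists_unifier_of_firing hSig hσ hh.1 hSp hSA
  obtain ⟨γ, hmgu, hid, habs⟩ := exists_mgu_comp_eq ⟨Φ, hU⟩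
  have hΦγ : ∀ x : Atom, (x.subst γ).subst Φ = x.subst Φ := fun x => by
    rw [Atom.subst_subst, habs Φ hU]
  have hy : ∀ x ∈ (p.body \ S) ∪ (σ.rename ρ).body,
      (x ∈ p.body \ S ∧ x.subst Φ = x.subst μ) ∨ x.subst Φ ∈ chaseStage Sig D n := by
    intro x hx
    rcases Finset.mem_union.mp hx with hx | hx
    · exact Or.inl ⟨hx, Atom.subst_congr fun t ht => hΦμ t fun v hv =>
        CQ.mem_vars_of_mem_body (Finset.mem_sdiff.mp hx).1 (hv ▸ ht)⟩
    · obtain ⟨b, hb, rfl⟩ := Finset.mem_image.mp hx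
      exact Or.inr (hΦσ b hb ▸ hh.2 b hb)
  refine ⟨_, Φ, Atom.subst γ, ⟨σ, hσ, ρ, hinj, hρV, S,
    applicable_of_subst_eq_fire hm.1 hinj hSp hSne ⟨Φ, hU⟩ hSA hunsh, γ, hmgu, hid,
    fun v hv => absurd hv (Finset.notMem_empty v), rfl⟩, ⟨hU.1, fun y hy' => ?_, fun t ht => ?_⟩,
    ?_, fun y hy' => ?_⟩
  · obtain ⟨x, hx, rfl⟩ := Finset.mem_image.mp hy'
    rw [hΦγ]
    rcases hy x hx with ⟨hx, he⟩ | hC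
    exacts [he ▸ hm.2.1 x (Finset.mem_sdiff.mp hx).1, chaseStage_subset_chase n hC]
  · obtain ⟨s, hs, rfl⟩ := List.mem_map.mp ht
    rw [show Φ (γ s) = Φ s from congrFun (habs Φ hU) s,
      hΦμ s fun v hv => CQ.mem_vars_of_mem_head (hv ▸ hs)]
    exact hm.2.2 s hs
  · rw [CQ.subst_head, hΦγ]
    exact Atom.subst_congr fun t ht => hΦμ t fun v hv => CQ.mem_vars_of_mem_head (hv ▸ ht)
  · obtain ⟨x, hx, rfl⟩ := Finset.mem_image.mp hy'
    rcases hy x hx with ⟨hx, he⟩ | hC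
    · exact Or.inr ⟨x, hx, rfl, (hΦγ x).trans he⟩
    · exact Or.inl (by rw [imageLevel, hΦγ]; exact chaseLevel_le hC)

variable (hD : ∀ a ∈ D, ∀ t ∈ a.args, ∃ c, t = Term.const c)
  (hSig : ∀ σ ∈ Sig, σ.NullFree) (hnf : ∀ σ ∈ Sig, σ.NormalForm)
include hD hSig hnf

/-- The atoms containing `v` all contain the null invented by the firing, so they are all sent
to the atom it created. -/
theorem ChaseMatch.exists_factStep {p : CQ} {μ : Term → Term} (hm : ChaseMatch Sig D p μ)
    {n : ℕ} (hn : p.body.sup (imageLevel Sig D μ) = n + 1) {σ : TGD} (hσ : σ ∈ Sig)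
    {h : Term → Term} (hh : IsHom h ↑σ.body (chaseStage Sig D n)) {a : Atom}
    (ha : a.subst μ = σ.head.subst (fireSubst σ h n)) {i v : ℕ} (hi : σ.exPos i)
    (hav : a.args[i]? = some (.var v)) (hv : p.shared v) :
    ∃ γ, IsFactStep Sig ∅ p (p.subst γ) ∧ ChaseMatch Sig D (p.subst γ) μ ∧
      (p.subst γ).head.subst μ = p.head.subst μ ∧
      (p.subst γ).body.sup (imageLevel Sig D μ) = n + 1 ∧
      MeasureLT (levelMeasure (p.subst γ).body (imageLevel Sig D μ))
        (levelMeasure p.body (imageLevel Sig D μ)) := by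
  have hμv : μ (.var v) = .null (freshNull σ h n) := by
    obtain ⟨z, hz, hzi⟩ := hi
    simpa [hav, hzi, fireSubst_exVar h n hz] using congrArg (·.args[i]?) ha
  have hvA : ∀ b ∈ p.body, .var v ∈ b.args → b.subst μ = σ.head.subst (fireSubst σ h n) :=
    fun b hb hvb => by
      refine eq_of_freshNull_mem hD hSig hσ hh.1 (chaseStage_mono ?_
        (mem_chaseStage_chaseLevel (hm.2.1 b hb))) (hμv ▸ List.mem_map_of_mem hvb)
      exact hn ▸ Finset.le_sup (f := imageLevel Sig D μ) hb
  have hvhead : .var v ∉ p.head.args := fun hvh => by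
    obtain ⟨c, hc⟩ := hm.2.2 _ hvh
    simp [hμv] at hc
  obtain ⟨γ, hstep, hγ, hninj⟩ := exists_factStep_of_isUnifier hσ
    (factorizable_of_subst_eq (hnf σ hσ) hm.1 hv hvhead hμv hvA
      (fun j hj => exPos_of_freshNull hD hSig hσ hh hj) ⟨i, hi⟩)
    (isUnifier_of_forall_subst_eq hm.1 fun b hb =>
      hvA b (Finset.mem_filter.mp hb).1 (Finset.mem_filter.mp hb).2)
  obtain ⟨hsup, hlt⟩ :=
    levelMeasure_image_lt (f := imageLevel Sig D μ) (f₁ := imageLevel Sig D μ)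
      (fun x _ => by simp only [imageLevel, Atom.subst_subst, hγ]) hninj
  exact ⟨γ, hstep, hm.subst_of_comp_eq hγ, by rw [CQ.subst_head, Atom.subst_subst, hγ],
    hsup.trans hn, hlt⟩

theorem ChaseMatch.exists_step {p : CQ} {μ : Term → Term} (hm : ChaseMatch Sig D p μ)
    (hL : 1 ≤ p.body.sup (imageLevel Sig D μ)) :
    ∃ p₁ μ₁, ChaseMatch Sig D p₁ μ₁ ∧ p₁.head.subst μ₁ = p.head.subst μ ∧
      MeasureLT (levelMeasure p₁.body (imageLevel Sig D μ₁))
        (levelMeasure p.body (imageLevel Sig D μ)) ∧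
      (IsRewriteStep Sig ∅ p p₁ ∨
        IsFactStep Sig ∅ p p₁ ∧ 1 ≤ p₁.body.sup (imageLevel Sig D μ₁)) := by
  obtain ⟨n, hn⟩ : ∃ n, p.body.sup (imageLevel Sig D μ) = n + 1 :=
    ⟨_, (Nat.succ_pred_eq_of_pos hL).symm⟩
  obtain ⟨a₀, ha₀, -, hlev, σ, hσ, h, hh, hA⟩ := hm.exists_top_firing hn
  set S := p.body.filter (·.subst μ = σ.head.subst (fireSubst σ h n))
  have hSA : ∀ a ∈ S, a.subst μ = σ.head.subst (fireSubst σ h n) := fun a ha =>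
    (Finset.mem_filter.mp ha).2
  by_cases hsh : ∃ a ∈ S, ∃ i v, σ.exPos i ∧ a.args[i]? = some (.var v) ∧ p.shared v
  · obtain ⟨a, ha, i, v, hi, hav, hv⟩ := hsh
    obtain ⟨γ, hstep, hm₁, hhead, hsup, hlt⟩ :=
      hm.exists_factStep hD hSig hnf hn hσ hh (hSA a ha) hi hav hv
    exact ⟨_, μ, hm₁, hhead, hlt, Or.inr ⟨hstep, hsup ▸ Nat.succ_pos n⟩⟩
  · obtain ⟨p₁, Φ, g, hstep, hm₁, hhead, hlev₁⟩ := hm.exists_rewriteStep hSig hσ hh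
      (Finset.filter_subset _ _) ⟨a₀, Finset.mem_filter.mpr ⟨ha₀, hA⟩⟩ hSA
      fun a ha i v hi hav hv => hsh ⟨a, ha, i, v, hi, hav, hv⟩
    refine ⟨p₁, Φ, hm₁, hhead, levelMeasure_lt_of_replace (S := S) (g := g)
      (Finset.filter_subset _ _) ⟨a₀, Finset.mem_filter.mpr ⟨ha₀, hA⟩⟩ (fun x hx => ?_)
      (fun y hy => ?_), Or.inl hstep⟩
    · rw [hn, ← hlev]
      exact congrArg (chaseLevel Sig D) ((hSA x hx).trans hA.symm)
    · rcases hlev₁ y hy with h | ⟨x, hx, hgx, he⟩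
      · exact Or.inl (hn ▸ Nat.lt_succ_of_le h)
      · exact Or.inr ⟨x, hx, hgx, congrArg (chaseLevel Sig D) he⟩

theorem Reach.exists_xRewriteOut {q₀ p : CQ} {μ : Term → Term} (hre : Reach Sig ∅ q₀ p)
    (hm : ChaseMatch Sig D p μ)
    (hout : p ∈ XRewriteOut Sig ∅ q₀ ∨ 1 ≤ p.body.sup (imageLevel Sig D μ)) :
    ∃ p' ∈ XRewriteOut Sig ∅ q₀, ∃ ν, IsHom ν ↑p'.body ↑D ∧
      p'.head.subst ν = p.head.subst μ := by
  induction hM : levelMeasure p.body (imageLevel Sig D μ) using measureLT_wf.induction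
    generalizing p μ with
  | _ M ih =>
  by_cases hL : 1 ≤ p.body.sup (imageLevel Sig D μ)
  · obtain ⟨p₁, μ₁, hm₁, hhead, hlt, hstep⟩ := hm.exists_step hD hSig hnf hL
    have hout₁ : p₁ ∈ XRewriteOut Sig ∅ q₀ ∨
        1 ≤ p₁.body.sup (imageLevel Sig D μ₁) := by
      rcases hstep with hstep | ⟨-, h⟩
      exacts [Or.inl (Or.inr ⟨p, hre, hstep⟩), Or.inr h]
    have hre₁ : Reach Sig ∅ q₀ p₁ := by
      rcases hstep with hstep | ⟨hstep, -⟩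
      exacts [hre.rw hstep, hre.fact hstep]
    obtain ⟨p', hp', ν, hν, hhead'⟩ := ih _ (hM ▸ hlt) hre₁ hm₁ hout₁ rfl
    exact ⟨p', hp', ν, hν, hhead'.trans hhead⟩
  · refine ⟨p, hout.resolve_right hL, μ, ⟨hm.1, fun a ha => ?_⟩, rfl⟩
    have h0 : chaseLevel Sig D (a.subst μ) = 0 :=
      Nat.lt_one_iff.mp ((Finset.le_sup (f := imageLevel Sig D μ) ha).trans_lt (not_le.mp hL))
    have := mem_chaseStage_chaseLevel (hm.2.1 a ha)
    rwa [h0] at this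

end Completeness

/-! ## Existential-join decompositions -/

theorem mem_compHeadVars {q : CQ} {S : Finset Atom} {v : ℕ} :
    v ∈ compHeadVars q S ↔
      v ∈ varsOfSet S ∧ (v ∈ q.head.vars ∨ v ∈ varsOfSet (q.body \ S)) := by
  simp [compHeadVars, Finset.mem_sort]

theorem compCQ_head_subst_eq_iff {q : CQ} {pid : Finset Atom → ℕ} {S : Finset Atom}
    {f g : Term → Term} : (compCQ q pid S).head.subst f = (compCQ q pid S).head.subst g ↔
      ∀ v ∈ compHeadVars q S, f (.var v) = g (.var v) := by
  simp [compCQ, Atom.subst, List.map_inj_left]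

theorem compCQ_nullFree {q : CQ} (hq : ∀ a ∈ q.body, ∀ t ∈ a.args, t.noNull)
    (pid : Finset Atom → ℕ) {S : Finset Atom} (hS : S ⊆ q.body) : (compCQ q pid S).NullFree :=
  ⟨fun t ht => by obtain ⟨v, -, rfl⟩ := List.mem_map.mp ht; trivial,
    fun a ha => hq a (hS ha)⟩

namespace ExJoinDecomp

variable {Sig : Finset TGD} {q : CQ} {P : Finset (Finset Atom)} (hP : ExJoinDecomp Sig q P)
include hP

theorem eq_of_mem {S S' : Finset Atom} (hS : S ∈ P) (hS' : S' ∈ P) {a : Atom} (ha : a ∈ S)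
    (ha' : a ∈ S') : S = S' := by
  obtain ⟨T, -, hT⟩ := hP.2.2.1 a (hP.2.1 S hS ha)
  exact (hT S ⟨hS, ha⟩).trans (hT S' ⟨hS', ha'⟩).symm

theorem mem_compHeadVars_of_ne {S S' : Finset Atom} (hS : S ∈ P) (hS' : S' ∈ P) (hne : S ≠ S')
    {v : ℕ} (hv : v ∈ varsOfSet S) (hv' : v ∈ varsOfSet S') : v ∈ compHeadVars q S := by
  obtain ⟨b, hb, hvb⟩ := mem_varsOfSet.mp hv'
  refine mem_compHeadVars.mpr ⟨hv, Or.inr (mem_varsOfSet.mpr ⟨b, ?_, hvb⟩)⟩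
  exact Finset.mem_sdiff.mpr ⟨hP.2.1 S' hS' hb, fun hbS => hne (hP.eq_of_mem hS hS' hbS hb)⟩

theorem exists_glued_hom (hq : ∀ a ∈ q.body, ∀ t ∈ a.args, t.noNull) {I : Set Atom}
    {G₀ : Term → Term} (hG₀ : constFix G₀) {g : Finset Atom → Term → Term}
    (hg : ∀ S ∈ P, IsHom (g S) ↑S I)
    (hexp : ∀ S ∈ P, ∀ v ∈ compHeadVars q S, g S (.var v) = G₀ (.var v)) :
    ∃ G, IsHom G ↑q.body I ∧ q.head.subst G = q.head.subst G₀ := by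
  let G : Term → Term := fun t => match t with
    | .var v => if h : ∃ S ∈ P, v ∈ varsOfSet S then g h.choose (.var v) else G₀ t
    | t => G₀ t
  have hGS : ∀ S ∈ P, ∀ v ∈ varsOfSet S, G (.var v) = g S (.var v) := by
    intro S hS v hv
    have hex : ∃ S ∈ P, v ∈ varsOfSet S := ⟨S, hS, hv⟩
    obtain ⟨hS₀, hv₀⟩ := hex.choose_spec
    refine (dif_pos hex).trans ?_
    by_cases hSS : hex.choose = S
    · rw [hSS]
    · rw [hexp _ hS₀ v (hP.mem_compHeadVars_of_ne hS₀ hS hSS hv₀ hv),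
        hexp S hS v (hP.mem_compHeadVars_of_ne hS hS₀ (Ne.symm hSS) hv hv₀)]
  refine ⟨G, ⟨hG₀, fun a ha => ?_⟩, Atom.subst_congr fun t ht => ?_⟩
  · obtain ⟨S, ⟨hS, haS⟩, -⟩ := hP.2.2.1 a ha
    suffices a.subst G = a.subst (g S) from this ▸ (hg S hS).2 a haS
    refine Atom.subst_congr fun t ht => ?_
    obtain ⟨c, rfl⟩ | ⟨v, rfl⟩ := Term.noNull_iff.mp (hq a ha t ht)
    · exact (hG₀ c).trans ((hg S hS).1 c).symm
    · exact hGS S hS v (mem_varsOfSet.mpr ⟨a, haS, ht⟩)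
  · cases t with
    | var v =>
      by_cases hex : ∃ S ∈ P, v ∈ varsOfSet S
      · obtain ⟨S, hS, hv⟩ := hex
        rw [hGS S hS v hv]
        exact hexp S hS v (mem_compHeadVars.mpr ⟨hv, Or.inl (Atom.mem_vars.mpr ht)⟩)
      · exact dif_neg hex
    | _ => rfl

end ExJoinDecomp

theorem ucqEval_parallelOut_subset_certAns {Sig : Finset TGD} {q : CQ}
    (hq : ∀ a ∈ q.body, ∀ t ∈ a.args, t.noNull) (hnf : ∀ σ ∈ Sig, σ.NormalForm)
    (hhead : ∀ σ ∈ Sig, ∀ t ∈ σ.head.args, t.noNull) {D : Finset Atom}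
    {P : Finset (Finset Atom)} (hP : ExJoinDecomp Sig q P) {pid : Finset Atom → ℕ}
    (hterm : ∀ S ∈ P, ∃ Q : Finset CQ,
      ∀ p : CQ, Reach Sig ∅ (compCQ q pid S) p → ∃ p' ∈ Q, CQEquiv p p') :
    ucqEval (ParallelOut Sig q P pid) ↑D ⊆ certAns q D Sig := by
  intro t ht I hDI hsat
  simp only [ucqEval, Set.mem_iUnion] at ht
  obtain ⟨_, ⟨c, ρ, θ, hc, -, -, -, hθ, rfl⟩, htc, hh, hhD, rfl⟩ := ht
  have hblock : ∀ S ∈ P, ∃ g, IsHom g ↑S I ∧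
      (compCQ q pid S).head.subst g = (compCQ q pid S).head.subst (hh ∘ θ) := by
    intro S hS
    have hcS : IsHom (hh ∘ θ ∘ renT (ρ S)) ↑(c S).body I := by
      refine ⟨hhD.1.comp (hθ.1.1.comp fun _ => rfl), fun b hb => hDI ?_⟩
      simpa only [Atom.subst_subst] using hhD.2 _ (Finset.mem_sup.mpr ⟨S, hS,
        Finset.mem_image_of_mem _ (Finset.mem_image_of_mem _ hb)⟩)
    obtain ⟨g, hg, hgh⟩ := Reach.sound hsat hnf hhead (hterm S hS)
      (compCQ_nullFree hq pid (hP.2.1 S hS)) (Reach.of_mem_xRewriteOut (hc S hS)) hcS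
    refine ⟨g, hg, hgh.trans ?_⟩
    have := congrArg (Atom.subst hh) (hθ.1.2 _ (Finset.mem_image_of_mem _ hS))
    simpa only [Atom.subst_subst, Function.comp_assoc] using this
  choose! g hg hgh using hblock
  obtain ⟨G, hG, hGh⟩ := hP.exists_glued_hom hq (hhD.1.comp hθ.1.1) hg fun S hS =>
    compCQ_head_subst_eq_iff.mp (hgh S hS)
  refine ⟨htc, G, hG, ?_⟩
  simpa only [Atom.subst_args, List.map_map] using congrArg Atom.args hGh

theorem ExJoinDecomp.exists_const_of_mem_compHeadVars {Sig : Finset TGD} {D : Finset Atom}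
    (hD : ∀ a ∈ D, ∀ t ∈ a.args, ∃ c, t = Term.const c)
    (hSig : ∀ σ ∈ Sig, σ.NullFree) {q : CQ} {P : Finset (Finset Atom)}
    (hP : ExJoinDecomp Sig q P) {μ : Term → Term}
    (hμ : IsHom μ ↑q.body (chase Sig D))
    (hhead : ∀ v ∈ q.head.vars, ∃ c, μ (.var v) = .const c)
    {S : Finset Atom} (hS : S ∈ P) {v : ℕ} (hv : v ∈ compHeadVars q S) :
    ∃ c, μ (.var v) = .const c := by
  obtain ⟨hvS, hvh | hvo⟩ := mem_compHeadVars.mp hv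
  · exact hhead v hvh
  obtain ⟨b, hb, hvb⟩ := mem_varsOfSet.mp hvS
  have hbq := hP.2.1 S hS hb
  rcases chase_args_cases hD hSig (hμ.2 b hbq) (List.mem_map_of_mem (f := μ) hvb) with
    hc | ⟨σ, hσ, h, k, hN⟩
  · exact hc
  have haff : OnlyAffectedVar Sig q v := ⟨σ, hσ, fun a ha j hj => by
    simpa using affectedPos_of_freshNull hD hSig (hμ.2 a ha) (h := h) (k := k) (j := j)
      (by simp [hj, hN])⟩
  obtain ⟨S₁, -, -, huniq⟩ := hP.2.2.2 v (mem_varsOfSet.mpr ⟨b, hbq, hvb⟩) haff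
  obtain ⟨b', hb', hvb'⟩ := mem_varsOfSet.mp hvo
  obtain ⟨hb'q, hb'S⟩ := Finset.mem_sdiff.mp hb'
  obtain ⟨S₂, ⟨hS₂, hb'S₂⟩, -⟩ := hP.2.2.1 b' hb'q
  by_cases h : S = S₁
  · exact absurd (mem_varsOfSet.mpr ⟨b', hb'S₂, hvb'⟩)
      (huniq S₂ hS₂ fun e => hb'S (h ▸ e ▸ hb'S₂))
  · exact absurd hvS (huniq S hS h)

theorem map_mem_ucqEval_parallelOut {Sig : Finset TGD} {q : CQ} {P : Finset (Finset Atom)}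
    (hPq : ∀ S ∈ P, S ⊆ q.body) {pid : Finset Atom → ℕ} {J : Set Atom} {μ : Term → Term}
    (hμ : constFix μ) (htc : isConstTuple (q.head.args.map μ)) {c : Finset Atom → CQ}
    {ν : Finset Atom → Term → Term} (hc : ∀ S ∈ P, c S ∈ XRewriteOut Sig ∅ (compCQ q pid S))
    (hcnf : ∀ S ∈ P, (c S).NullFree) (hν : ∀ S ∈ P, IsHom (ν S) ↑(c S).body J)
    (hνh : ∀ S ∈ P, (c S).head.subst (ν S) = (compCQ q pid S).head.subst μ) :
    q.head.args.map μ ∈ ucqEval (ParallelOut Sig q P pid) J := by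
  obtain ⟨ρ, hρ, hρV, Θ, hΘc, hΘμ, hΘρ⟩ := exists_rename_apart q.vars μ hμ ν
  have hΘpairs : IsUnifPairs Θ (P.image fun S =>
      (Atom.subst (renT (ρ S)) (c S).head, (compCQ q pid S).head)) := by
    refine ⟨hΘc, ?_⟩
    simp only [Finset.mem_image]
    rintro _ ⟨S, hS, rfl⟩
    rw [subst_renT_subst hΘc (hν S hS).1 (hΘρ S) (hcnf S hS).1, hνh S hS]
    refine compCQ_head_subst_eq_iff.mpr fun v hv => (hΘμ _ fun w hw => ?_).symm
    obtain ⟨b, hb, hvb⟩ := mem_varsOfSet.mp (mem_compHeadVars.mp hv).1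
    exact CQ.mem_vars_of_mem_body (hPq S hS hb) (Term.var.inj hw ▸ hvb)
  obtain ⟨θ, hθ, habs, -⟩ := exists_unifPairs_comp_eq ⟨Θ, hΘpairs⟩
  refine Set.mem_iUnion₂.mpr ⟨_, ⟨c, ρ, θ, hc, fun S _ v w e => (hρ S S v w e).2,
    fun S _ => hρV S, fun S _ S' _ hne v u e => hne (hρ S S' v u e).1,
    IsMGUPairs.of_comp_eq hθ habs, rfl⟩, htc, Θ, ⟨hΘc, fun a ha => ?_⟩, ?_⟩
  · obtain ⟨S, hS, ha⟩ := Finset.mem_sup.mp ha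
    obtain ⟨_, hb', rfl⟩ := Finset.mem_image.mp ha
    obtain ⟨b, hb, rfl⟩ := Finset.mem_image.mp hb'
    rw [Atom.subst_subst, habs Θ hΘpairs, subst_renT_subst hΘc (hν S hS).1 (hΘρ S)
      ((hcnf S hS).2 b hb)]
    exact (hν S hS).2 b hb
  · simp only [Atom.subst_args, List.map_map, habs Θ hΘpairs]
    exact List.map_congr_left fun s hs => hΘμ s fun v hv => CQ.mem_vars_of_mem_head (hv ▸ hs)

theorem certAns_subset_ucqEval_parallelOut {Sig : Finset TGD} {D : Finset Atom}
    (hD : ∀ a ∈ D, ∀ t ∈ a.args, ∃ c, t = Term.const c)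
    (hSig : ∀ σ ∈ Sig, σ.NullFree) (hnf : ∀ σ ∈ Sig, σ.NormalForm) {q : CQ}
    (hq : ∀ a ∈ q.body, ∀ t ∈ a.args, t.noNull)
    {P : Finset (Finset Atom)} (hP : ExJoinDecomp Sig q P) {pid : Finset Atom → ℕ}
    (hterm : ∀ S ∈ P, ∃ Q : Finset CQ,
      ∀ p : CQ, Reach Sig ∅ (compCQ q pid S) p → ∃ p' ∈ Q, CQEquiv p p') :
    certAns q D Sig ⊆ ucqEval (ParallelOut Sig q P pid) ↑D := by
  intro t ht
  obtain ⟨htc, μ, hμ, rfl⟩ := ht (chase Sig D) subset_chase chase_sat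
  have hblock : ∀ S ∈ P, ∃ c ν, c ∈ XRewriteOut Sig ∅ (compCQ q pid S) ∧
      IsHom ν ↑c.body ↑D ∧ c.head.subst ν = (compCQ q pid S).head.subst μ := by
    intro S hS
    have hm : ChaseMatch Sig D (compCQ q pid S) μ := by
      refine ⟨hμ.1, fun a ha => hμ.2 a (hP.2.1 S hS ha), fun s hs => ?_⟩
      obtain ⟨v, hv, rfl⟩ := List.mem_map.mp hs
      exact hP.exists_const_of_mem_compHeadVars hD hSig hμ
        (fun w hw => htc _ (List.mem_map_of_mem (Atom.mem_vars.mp hw))) hS hv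
    obtain ⟨c, hc, ν, hν, hνh⟩ :=
      Reach.refl.exists_xRewriteOut hD hSig hnf hm (Or.inl (Or.inl rfl))
    exact ⟨c, ν, hc, hν, hνh⟩
  choose! c ν hc hν hνh using hblock
  refine map_mem_ucqEval_parallelOut hP.2.1 hμ.1 htc hc (fun S hS => ?_) hν hνh
  exact (Reach.of_mem_xRewriteOut (hc S hS)).nullFree (hterm S hS)
    (compCQ_nullFree hq pid (hP.2.1 S hS))

theorem xrewrite_parallel_correct_general
    (R : Schema) (Sig : Finset TGD) (q : CQ)
    (hq : q.overSchema R)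
    (hover : ∀ σ ∈ Sig, σ.overSchema R) (hnf : ∀ σ ∈ Sig, σ.NormalForm)
    (D : Finset Atom) (hD : IsDatabase R D)
    (P : Finset (Finset Atom)) (hP : OptimalDecomp Sig q P)
    (pid : Finset Atom → ℕ)
    (hterm : ∀ S ∈ P, ∃ Q : Finset CQ,
      ∀ p : CQ, Reach Sig ∅ (compCQ q pid S) p → ∃ p' ∈ Q, CQEquiv p p') :
    ucqEval (ParallelOut Sig q P pid) ↑D = certAns q D Sig := by
  have hSig : ∀ σ ∈ Sig, σ.NullFree := fun σ hσ => (hover σ hσ).nullFree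
  have hqbody : ∀ a ∈ q.body, ∀ t ∈ a.args, t.noNull := fun a ha => (hq.1 a ha).2
  exact (ucqEval_parallelOut_subset_certAns hqbody hnf (fun σ hσ => (hSig σ hσ).2) hP.1
    hterm).antisymm
      (certAns_subset_ucqEval_parallelOut (fun a ha => (hD a ha).2) hSig hnf hqbody hP.1 hterm)

/-- correctness of XRewriteParallel: the UCQ obtained by
decomposing q, rewriting the components independently and unfolding via the
reconciliation rule, evaluated over D, yields the certain answers of q. -/
theorem xrewrite_parallel_correct
    (R : Schema) (Sig : Finset TGD) (q : CQ)
    (hq : q.overSchema R)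
    (hover : ∀ σ ∈ Sig, σ.overSchema R) (hnf : ∀ σ ∈ Sig, σ.NormalForm)
    (D : Finset Atom) (hD : IsDatabase R D)
    (P : Finset (Finset Atom)) (hP : OptimalDecomp Sig q P)
    (pid : Finset Atom → ℕ) (hpidInj : Function.Injective pid)
    (hpidFresh : ∀ S : Finset Atom, pid S ∉ R.preds ∧ pid S ≠ q.head.pred)
    (hterm : ∀ S ∈ P, ∃ Q : Finset CQ,
      ∀ p : CQ, Reach Sig ∅ (compCQ q pid S) p → ∃ p' ∈ Q, CQEquiv p p') :
    ucqEval (ParallelOut Sig q P pid) ↑D = certAns q D Sig :=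
  xrewrite_parallel_correct_general R Sig q hq hover hnf D hD P hP pid hterm

end OntDB
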